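/- arXiv:1106.1666 — 10 statements merged into one kernel-verified Lean document; each statement's English description precedes it below -/
import Mathlib

section
/- For any multi-index α = (α_1,...,α_n) of nonnegative integers with |α| = α_1 + ... + α_n = 2d, the polynomial p(X) = Σ_{i=1}^n α_i X_i^{2d} − 2d·X_1^{α_1}···X_n^{α_n} is a sum of squares of binomials, i.e., a sum of squares of polynomials of the form a·X^β − b·X^γ. -/
/-!
Write `F(α) = Σ α_i X_i^{2d} − 2d·X^α`. Splitting `α = u + v` with `|u| = |v| = d`, the
identity `2 F(u + v) = F(2u) + F(2v) + 2d (X^u − X^v)²` reduces the theorem to the forms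
`F(2w)` with `|w| = d`. If `w` has two nonzero exponents `w_i ≥ w_j`, moving `w_j` units
between `i` and `j` writes `2w = u + v` with `|u| = |v| = d` and `supp v ⊊ supp w`, so by
induction on the support `2 F(2w) − F(2u)` is a sum of binomial squares. Iterating `w ↦ u`
need not terminate, but it stays in a finite set, hence runs into a cycle; telescoping along a
cycle of length `p` puts `(2^p − 1) F(2w)` into the cone of sums of binomial squares, hence
also `F(2w)`.
-/

open MvPolynomial

/-- The set of squares of binomials `a·X^β − b·X^γ` in `ℝ[X_1,…,X_n]`. -/
def binomSq (n : ℕ) : Set (MvPolynomial (Fin n) ℝ) :=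
  {q | ∃ (a b : ℝ) (β γ : Fin n →₀ ℕ),
    q = (monomial β a - monomial γ b) ^ 2}

/-- `p` is a sum of binomial squares. -/
def IsSOBS {n : ℕ} (p : MvPolynomial (Fin n) ℝ) : Prop :=
  p ∈ AddSubmonoid.closure (binomSq n)

theorem PointedCone.mem_of_forall_exists_smul_sub_mem {α E : Type*} [Finite α]
    [AddCommGroup E] [Module ℝ E] (C : PointedCone ℝ E) {c : ℝ} (hc : 1 < c) (f : α → E)
    (h : ∀ a, ∃ b, c • f a - f b ∈ C) (a : α) : f a ∈ C := by
  choose g hg using h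
  have telescope : ∀ k a, c ^ k • f a - f (g^[k] a) ∈ C := by
    intro k
    induction k with
    | zero => simp
    | succ k ih =>
      intro a
      have hsplit : c ^ (k + 1) • f a - f (g^[k + 1] a)
          = c ^ k • (c • f a - f (g a)) + (c ^ k • f (g a) - f (g^[k] (g a))) := by
        rw [Function.iterate_succ_apply]; module
      rw [hsplit]
      exact C.add_mem (C.smul_mem (by positivity) (hg a)) (ih (g a))
  have mem_of_iterate_eq : ∀ i j, i < j → g^[i] a = g^[j] a → f (g^[i] a) ∈ C := by
    intro i j hij hgij
    have hcycle : g^[j - i] (g^[i] a) = g^[i] a := by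
      rw [← Function.iterate_add_apply, Nat.sub_add_cancel hij.le, hgij]
    have hmem : (c ^ (j - i) - 1) • f (g^[i] a) ∈ C := by
      simpa only [sub_smul, one_smul, hcycle] using telescope (j - i) (g^[i] a)
    exact (C.smul_mem_iff (sub_pos.mpr (one_lt_pow₀ hc (by omega)))).mp hmem
  obtain ⟨i, j, hne, hgij⟩ := Finite.exists_ne_map_eq_of_infinite fun k => g^[k] a
  obtain ⟨k, hk⟩ : ∃ k, f (g^[k] a) ∈ C := by
    rcases hne.lt_or_gt with hlt | hlt
    · exact ⟨i, mem_of_iterate_eq i j hlt hgij⟩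
    · exact ⟨j, mem_of_iterate_eq j i hlt hgij.symm⟩
  rw [← C.smul_mem_iff (pow_pos (zero_lt_one.trans hc) k),
    ← sub_add_cancel (c ^ k • f a) (f (g^[k] a))]
  exact C.add_mem (telescope k a) hk

namespace Finsupp

variable {ι : Type*}

theorem exists_add_eq_add_self_of_le {w : ι →₀ ℕ} {i j : ι} (hij : i ≠ j)
    (hj : j ∈ w.support) (hle : w j ≤ w i) :
    ∃ u v : ι →₀ ℕ, u + v = w + w ∧ u.degree = w.degree ∧
      u.support ⊆ w.support ∧ v.support ⊂ w.support := by
  classical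
  have hi : single i (w j) ≤ w := single_le_iff.mpr hle
  refine ⟨w - single i (w j) + single j (w j), w - single j (w j) + single i (w j),
    ?_, ?_, ?_, ?_⟩
  · ext k
    simp only [coe_add, coe_tsub, Pi.add_apply, Pi.sub_apply, single_apply]
    grind
  · have := congrArg degree (tsub_add_cancel_of_le hi)
    simp only [map_add, degree_single] at this ⊢
    omega
  · intro k
    simp only [mem_support_iff, coe_add, coe_tsub, Pi.add_apply, Pi.sub_apply, single_apply]
    grind
  · rw [Finset.ssubset_iff_of_subset]
    · exact ⟨j, hj, by simp [hij]⟩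
    · intro k
      simp only [mem_support_iff, coe_add, coe_tsub, Pi.add_apply, Pi.sub_apply, single_apply]
      grind

theorem exists_add_eq_add_self {w : ι →₀ ℕ} (hw : 1 < w.support.card) :
    ∃ u v : ι →₀ ℕ, u + v = w + w ∧ u.degree = w.degree ∧
      u.support ⊆ w.support ∧ v.support ⊂ w.support := by
  obtain ⟨a, ha, b, hb, hab⟩ := Finset.one_lt_card.mp hw
  rcases le_total (w b) (w a) with hle | hle
  · exact exists_add_eq_add_self_of_le hab hb hle
  · exact exists_add_eq_add_self_of_le hab.symm ha hle

end Finsupp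

variable {n : ℕ}

theorem smul_mem_binomSq {c : ℝ} (hc : 0 ≤ c) {q : MvPolynomial (Fin n) ℝ}
    (hq : q ∈ binomSq n) : c • q ∈ binomSq n := by
  obtain ⟨a, b, β, γ, rfl⟩ := hq
  refine ⟨√c * a, √c * b, β, γ, ?_⟩
  rw [smul_eq_C_mul, ← C_mul_monomial, ← C_mul_monomial, ← mul_sub, mul_pow, ← C_pow,
    Real.sq_sqrt hc]

noncomputable def sobsCone (n : ℕ) : PointedCone ℝ (MvPolynomial (Fin n) ℝ) where
  toAddSubmonoid := AddSubmonoid.closure (binomSq n)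
  smul_mem' c p hp := by
    induction hp using AddSubmonoid.closure_induction with
    | mem q hq => exact AddSubmonoid.subset_closure (smul_mem_binomSq c.2 hq)
    | zero => simp
    | add x y _ _ hx hy => rw [smul_add]; exact AddSubmonoid.add_mem _ hx hy

theorem binomial_sq_mem_sobsCone (a b : ℝ) (β γ : Fin n →₀ ℕ) :
    (monomial β a - monomial γ b) ^ 2 ∈ sobsCone n :=
  AddSubmonoid.subset_closure ⟨a, b, β, γ, rfl⟩

-- Reznick's "agiform", named after the arithmetic-geometric inequality.
noncomputable def agiForm (m : ℕ) (α : Fin n →₀ ℕ) : MvPolynomial (Fin n) ℝ :=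
  ∑ i, C (α i : ℝ) * X i ^ m - C (m : ℝ) * monomial α 1

theorem two_smul_agiForm_add (m : ℕ) (u v : Fin n →₀ ℕ) :
    (2 : ℝ) • agiForm m (u + v) = agiForm m (u + u) + agiForm m (v + v)
      + (m : ℝ) • (monomial u (1 : ℝ) - monomial v 1) ^ 2 := by
  have hsq : (monomial u (1 : ℝ) - monomial v 1) ^ 2
      = monomial (u + u) 1 + monomial (v + v) 1 - 2 * monomial (u + v) 1 := by
    rw [sub_sq, sq, sq, mul_assoc, monomial_mul, monomial_mul, monomial_mul, mul_one]
    ring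
  simp only [agiForm, hsq, smul_eq_C_mul, Finsupp.add_apply, Nat.cast_add, map_add,
    add_mul, Finset.sum_add_distrib, map_ofNat]
  ring

theorem agiForm_eq_zero_of_card_support_le_one {m : ℕ} {w : Fin n →₀ ℕ}
    (hw : w.support.card ≤ 1) (hdeg : w.degree = m) : agiForm m w = 0 := by
  rcases isEmpty_or_nonempty (Fin n) with hn | hn
  · obtain rfl : w = 0 := Subsingleton.elim _ _
    obtain rfl : m = 0 := by simpa using hdeg.symm
    simp [agiForm]
  · obtain ⟨i, b, rfl⟩ := Finsupp.card_support_le_one'.mp hw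
    obtain rfl : b = m := by simpa using hdeg
    rw [agiForm, Finset.sum_eq_single i (fun k _ hk => by simp [hk.symm])
      (by simp), Finsupp.single_eq_same, X_pow_eq_monomial, sub_self]

theorem agiForm_add_self_mem_sobsCone {d : ℕ} (s : Finset (Fin n)) :
    ∀ w : Fin n →₀ ℕ, w.support ⊆ s → w.degree = d →
      agiForm (2 * d) (w + w) ∈ sobsCone n := by
  induction s using Finset.strongInduction with
  | H s ih =>
  let T := {w : Fin n →₀ ℕ // w.support ⊆ s ∧ w.degree = d}
  have : Finite T := ((Finsupp.finite_of_degree_eq d).subset fun w hw => hw.2).to_subtype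
  intro w hws hwd
  refine (sobsCone n).mem_of_forall_exists_smul_sub_mem one_lt_two
    (fun z : T => agiForm (2 * d) (z.1 + z.1)) ?_ ⟨w, hws, hwd⟩
  rintro ⟨z, hzs, hzd⟩
  by_cases hz : 1 < z.support.card
  · obtain ⟨u, v, huv, hu, hus, hvs⟩ := Finsupp.exists_add_eq_add_self hz
    have hv : v.degree = d := by
      have := congrArg Finsupp.degree huv
      simp only [map_add] at this
      omega
    refine ⟨⟨u, hus.trans hzs, hu.trans hzd⟩, ?_⟩
    rw [← huv, two_smul_agiForm_add, add_assoc, add_sub_cancel_left]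
    exact add_mem (ih _ (hvs.trans_subset hzs) v subset_rfl hv)
      ((sobsCone n).smul_mem (Nat.cast_nonneg _) (binomial_sq_mem_sobsCone _ _ _ _))
  · refine ⟨⟨z, hzs, hzd⟩, ?_⟩
    have hcard : (z + z).support.card ≤ 1 :=
      (Finset.card_le_card Finsupp.support_add).trans (by simpa using not_lt.mp hz)
    rw [agiForm_eq_zero_of_card_support_le_one hcard (by simp [hzd, two_mul])]
    simp

/-- Hurwitz–Reznick: for `|α| = 2d`, the form
`Σ α_i X_i^{2d} − 2d·X^α` is a sum of binomial squares. -/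
theorem hurwitz_reznick {n d : ℕ} (α : Fin n →₀ ℕ) (hα : ∑ i, α i = 2 * d) :
    IsSOBS (∑ i, C ((α i : ℝ)) * X i ^ (2 * d)
      - C ((2 * d : ℕ) : ℝ) * monomial α (1 : ℝ)) := by
  rw [← Finsupp.degree_eq_sum] at hα
  obtain ⟨u, hu, hdu⟩ := α.exists_le_degree_eq d (by omega)
  obtain ⟨v, rfl⟩ := exists_add_of_le hu
  have hdv : v.degree = d := by
    rw [map_add] at hα
    omega
  show agiForm (2 * d) (u + v) ∈ sobsCone n
  rw [← (sobsCone n).smul_mem_iff two_pos, two_smul_agiForm_add]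
  exact add_mem (add_mem (agiForm_add_self_mem_sobsCone _ u subset_rfl hdu)
    (agiForm_add_self_mem_sobsCone _ v subset_rfl hdv))
    ((sobsCone n).smul_mem (Nat.cast_nonneg _) (binomial_sq_mem_sobsCone _ _ _ _))
end

section
/- Let p(X) = Σ_{i=1}^n β_i X_i^{2d} − μ·X^α where α ∈ ℕ^n, |α| = 2d, β_i ≥ 0 for all i, and μ ≥ 0 if all α_i are even. If μ^{2d}·Π_{i=1}^n α_i^{α_i} ≤ (2d)^{2d}·Π_{i=1}^n β_i^{α_i}, then p is a sum of squares in ℝ[X_1,...,X_n]. -/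
open MvPolynomial Finset

/-!
Substituting `X i ↦ t i * X i` with `t i ^ (2d) = 2d β i / α i` turns the polynomial into a
multiple `λ ∈ [0, 1]` of the agiform `∑ (α i / 2d) X i ^ (2d) - X ^ α` plus a diagonal form with
nonnegative coefficients: the inequality on `μ` says precisely that `|μ| ≤ ∏ t i ^ α i`, and if
`μ < 0` some `α j` is odd and `t j` may be negated.

The agiform is a sum of squares (Hurwitz, Reznick). If `α = γ + γ'` then
`2 A(α) = (X^γ - X^γ')² + A(2γ) + A(2γ')`; halving `α` reduces to even exponents `2δ`, and the same
identity lowers the support of `δ` until at most two variables remain. There the agiform is the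
weighted AM–GM inequality `p a^(p+q) + q b^(p+q) ≥ (p+q) a^p b^q` for `a = x²`, `b = y²`, which
telescopes into the squares `((x² - y²) x^s y^t)²`.
-/

theorem IsSumSq.map {R S F : Type*} [Semiring R] [Semiring S] [FunLike F R S]
    [RingHomClass F R S] (f : F) {s : R} (hs : IsSumSq s) : IsSumSq (f s) := by
  induction hs with
  | zero => simp
  | sq_add a _ ih => simpa using ih.sq_add (f a)

theorem IsSumSq.natCast_inv {K : Type*} [Semifield K] (n : ℕ) : IsSumSq ((n : K)⁻¹) := by
  rcases eq_or_ne (n : K) 0 with h | h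
  · simp [h]
  · rw [show (n : K)⁻¹ = n * ((n : K)⁻¹ * (n : K)⁻¹) by field_simp]
    exact (IsSumSq.natCast n).mul (.mul_self _)

section WeightedAMGM

variable {R : Type*} [CommRing R] (x y : R)

theorem isSumSq_sq_sub_sq_mul_pow_sub_pow (m : ℕ) :
    IsSumSq ((x ^ 2 - y ^ 2) * ((x ^ 2) ^ m - (y ^ 2) ^ m)) := by
  induction m with
  | zero => simp
  | succ m ih =>
    have key : (x ^ 2 - y ^ 2) * ((x ^ 2) ^ (m + 1) - (y ^ 2) ^ (m + 1))
        = y ^ 2 * ((x ^ 2 - y ^ 2) * ((x ^ 2) ^ m - (y ^ 2) ^ m))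
          + ((x ^ 2 - y ^ 2) * x ^ m) ^ 2 := by ring
    rw [key]
    exact ((IsSquare.sq y).isSumSq.mul ih).add (IsSquare.sq _).isSumSq

theorem isSumSq_pow_mul_pow_sub_pow_sub (m q : ℕ) :
    IsSumSq ((x ^ 2) ^ (m + 1) * ((x ^ 2) ^ q - (y ^ 2) ^ q)
      - q * ((y ^ 2) ^ (m + q) * (x ^ 2 - y ^ 2))) := by
  induction q with
  | zero => simp
  | succ q ih =>
    have key : (x ^ 2) ^ (m + 1) * ((x ^ 2) ^ (q + 1) - (y ^ 2) ^ (q + 1))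
          - ((q + 1 : ℕ) : R) * ((y ^ 2) ^ (m + (q + 1)) * (x ^ 2 - y ^ 2))
        = y ^ 2 * ((x ^ 2) ^ (m + 1) * ((x ^ 2) ^ q - (y ^ 2) ^ q)
            - q * ((y ^ 2) ^ (m + q) * (x ^ 2 - y ^ 2)))
          + (x ^ 2 - y ^ 2) * ((x ^ 2) ^ (m + 1 + q) - (y ^ 2) ^ (m + 1 + q)) := by
      push_cast; ring
    rw [key]
    exact ((IsSquare.sq y).isSumSq.mul ih).add (isSumSq_sq_sub_sq_mul_pow_sub_pow x y _)

theorem isSumSq_weighted_amgm (p q : ℕ) :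
    IsSumSq (p * (x ^ 2) ^ (p + q) + q * (y ^ 2) ^ (p + q)
      - ((p + q : ℕ) : R) * ((x ^ 2) ^ p * (y ^ 2) ^ q)) := by
  induction p with
  | zero => simp
  | succ p ih =>
    have key : ((p + 1 : ℕ) : R) * (x ^ 2) ^ (p + 1 + q) + q * (y ^ 2) ^ (p + 1 + q)
          - ((p + 1 + q : ℕ) : R) * ((x ^ 2) ^ (p + 1) * (y ^ 2) ^ q)
        = x ^ 2 * (p * (x ^ 2) ^ (p + q) + q * (y ^ 2) ^ (p + q)
            - ((p + q : ℕ) : R) * ((x ^ 2) ^ p * (y ^ 2) ^ q))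
          + ((x ^ 2) ^ (p + 1) * ((x ^ 2) ^ q - (y ^ 2) ^ q)
            - q * ((y ^ 2) ^ (p + q) * (x ^ 2 - y ^ 2))) := by
      push_cast; ring
    rw [key]
    exact ((IsSquare.sq x).isSumSq.mul ih).add (isSumSq_pow_mul_pow_sub_pow_sub x y p q)

end WeightedAMGM

namespace Finsupp

variable {ι : Type*}

theorem exists_eq_single_add_single {δ : ι →₀ ℕ} (hδ : δ ≠ 0) (h : #δ.support ≤ 2) :
    ∃ i k p q, δ = single i p + single k q := by
  obtain ⟨i, hi⟩ := support_nonempty_iff.2 hδ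
  have : Nonempty ι := ⟨i⟩
  have hcard : #(δ.erase i).support ≤ 1 := by
    classical
    rw [support_erase, card_erase_of_mem hi]
    omega
  obtain ⟨k, q, hkq⟩ := card_support_le_one'.1 hcard
  exact ⟨i, k, δ i, q, by rw [← hkq, single_add_erase]⟩

theorem exists_add_eq_two_nsmul_of_two_lt_card (δ : ι →₀ ℕ) (h : 2 < #δ.support) :
    ∃ δ₁ δ₂ : ι →₀ ℕ, δ₁ + δ₂ = 2 • δ ∧ δ₁.degree = δ.degree ∧ δ₂.degree = δ.degree ∧
      #δ₁.support < #δ.support ∧ #δ₂.support < #δ.support := by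
  classical
  obtain ⟨m, hm, hmax⟩ := δ.support.exists_max_image δ (card_pos.1 (by omega))
  obtain ⟨l, hl, k, hk, hlk⟩ := one_lt_card.1 <| show 1 < #(δ.support.erase m) by
    rw [card_erase_of_mem hm]; omega
  have hlm := ne_of_mem_erase hl
  have hkm := ne_of_mem_erase hk
  replace hl := mem_of_mem_erase hl
  replace hk := mem_of_mem_erase hk
  have hla := hmax l hl
  have hka := hmax k hk
  rw [mem_support_iff] at hl hk hm
  set δ₀ := ((δ.erase l).erase k).erase m
  have hdeg : δ.degree = δ₀.degree + δ l + δ k + δ m := by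
    conv_lhs => rw [show δ = δ₀ + single l (δ l) + single k (δ k) + single m (δ m) by
      ext j; simp only [δ₀, coe_add, Pi.add_apply, erase_apply, single_apply]; grind]
    simp only [map_add, degree_single]
  -- `δ₁` drops `k`, `δ₂` drops `l`; the largest exponent `δ m` absorbs the difference.
  refine ⟨δ₀ + single l (2 * δ l) + single m (δ m + δ k - δ l),
    δ₀ + single k (2 * δ k) + single m (δ m + δ l - δ k), ?_, ?_, ?_, ?_, ?_⟩
  · ext j
    simp only [δ₀, coe_add, coe_smul, Pi.add_apply, Pi.smul_apply, smul_eq_mul, erase_apply,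
      single_apply]
    grind
  · simp only [map_add, degree_single]; omega
  · simp only [map_add, degree_single]; omega
  · refine (card_le_card (t := δ.support.erase k) fun j hj => ?_).trans_lt
      (card_erase_lt_of_mem (mem_support_iff.2 hk))
    simp only [δ₀, mem_support_iff, mem_erase, coe_add, Pi.add_apply, erase_apply, single_apply,
      ne_eq] at hj ⊢
    grind
  · refine (card_le_card (t := δ.support.erase l) fun j hj => ?_).trans_lt
      (card_erase_lt_of_mem (mem_support_iff.2 hl))
    simp only [δ₀, mem_support_iff, mem_erase, coe_add, Pi.add_apply, erase_apply, single_apply,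
      ne_eq] at hj ⊢
    grind

end Finsupp

section Agiform

variable {σ : Type*} [Fintype σ] (K : Type*) [Field K]

/-- Reznick's agiform (arithmetic–geometric inequality form), nonnegative when
`ν.degree = 2 * e`. -/
noncomputable def agiform (e : ℕ) (ν : σ →₀ ℕ) : MvPolynomial σ K :=
  ∑ i, C ((ν i : K) / (2 * e)) * X i ^ (2 * e) - monomial ν 1

variable {K}

theorem aeval_C_mul_X_monomial {R : Type*} [CommSemiring R] (t : σ → R) (ν : σ →₀ ℕ) :
    aeval (fun i => C (t i) * X i) (monomial ν (1 : R)) = C (∏ i, t i ^ ν i) * monomial ν 1 := by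
  simp only [monomial_eq, C_1, one_mul, Finsupp.prod_fintype _ _ (fun _ => pow_zero _), map_prod,
    map_pow, aeval_X, mul_pow, prod_mul_distrib]

theorem aeval_C_mul_X_agiform (t : σ → K) (e : ℕ) (ν : σ →₀ ℕ) :
    aeval (fun i => C (t i) * X i) (agiform K e ν) =
      ∑ i, C ((ν i : K) / (2 * e) * t i ^ (2 * e)) * X i ^ (2 * e)
        - C (∏ i, t i ^ ν i) * monomial ν 1 := by
  simp only [agiform, map_sub, map_sum, map_mul, aeval_C, algebraMap_eq, map_pow, aeval_X, mul_pow,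
    aeval_C_mul_X_monomial, mul_assoc]

variable [CharZero K]

theorem agiform_add (e : ℕ) (δ₁ δ₂ : σ →₀ ℕ) :
    agiform K e (δ₁ + δ₂) = C 2⁻¹ * ((monomial δ₁ 1 - monomial δ₂ 1) ^ 2
      + agiform K e (2 • δ₁) + agiform K e (2 • δ₂)) := by
  have hC2 : (C 2⁻¹ * 2 : MvPolynomial σ K) = 1 := by
    rw [← map_ofNat C, ← C_mul, inv_mul_cancel₀ two_ne_zero, C_1]
  have hmono (a b : σ →₀ ℕ) :
      (monomial (a + b) 1 : MvPolynomial σ K) = monomial a 1 * monomial b 1 := by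
    rw [monomial_mul, mul_one]
  simp only [agiform, two_nsmul, Finsupp.coe_add, Pi.add_apply, Nat.cast_add, add_div, C_add,
    add_mul, sum_add_distrib, hmono]
  linear_combination (monomial δ₁ 1 * monomial δ₂ 1
    - ∑ i, C ((δ₁ i : K) / (2 * e)) * X i ^ (2 * e)
    - ∑ i, C ((δ₂ i : K) / (2 * e)) * X i ^ (2 * e)) * hC2

theorem isSumSq_agiform_add {e : ℕ} {δ₁ δ₂ : σ →₀ ℕ} (h₁ : IsSumSq (agiform K e (2 • δ₁)))
    (h₂ : IsSumSq (agiform K e (2 • δ₂))) : IsSumSq (agiform K e (δ₁ + δ₂)) := by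
  rw [agiform_add]
  exact ((IsSumSq.natCast_inv 2).map C).mul (((IsSquare.sq _).isSumSq.add h₁).add h₂)

theorem agiform_two_nsmul_single_add_single (i k : σ) {p q : ℕ} (hpq : p + q ≠ 0) :
    agiform K (p + q) (2 • (Finsupp.single i p + Finsupp.single k q))
      = C ((p + q : ℕ) : K)⁻¹ * ((p : MvPolynomial σ K) * (X i ^ 2) ^ (p + q)
        + (q : MvPolynomial σ K) * (X k ^ 2) ^ (p + q)
        - ((p + q : ℕ) : MvPolynomial σ K) * ((X i ^ 2) ^ p * (X k ^ 2) ^ q)) := by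
  classical
  have hinv : C ((p : K) + q)⁻¹ * ((p : MvPolynomial σ K) + (q : MvPolynomial σ K)) = 1 := by
    rw [← map_natCast C, ← map_natCast C, ← C_add, ← C_mul, inv_mul_cancel₀ (by exact_mod_cast hpq),
      C_1]
  have hcoeff (r : ℕ) : C (((2 * r : ℕ) : K) / (2 * p + 2 * q))
      = C ((p : K) + q)⁻¹ * (r : MvPolynomial σ K) := by
    rw [← map_natCast C, ← C_mul]
    congr 1
    field_simp
    push_cast
    ring
  have hmono : (monomial (2 • (Finsupp.single i p + Finsupp.single k q)) 1 : MvPolynomial σ K)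
      = (X i ^ 2) ^ p * (X k ^ 2) ^ q := by
    rw [← one_pow 2, ← monomial_pow, ← mul_one 1, ← monomial_mul, ← X_pow_eq_monomial,
      ← X_pow_eq_monomial]
    ring
  simp only [agiform, hmono, Finsupp.coe_smul, Finsupp.coe_add, Pi.smul_apply, Pi.add_apply,
    smul_eq_mul, Finsupp.single_apply, mul_add, Nat.cast_add, add_div, map_add, add_mul,
    sum_add_distrib, mul_ite, mul_zero, Nat.cast_ite, Nat.cast_zero, ite_div, zero_div,
    apply_ite C, map_zero, ite_mul, zero_mul, sum_ite_eq, mem_univ, if_true]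
  rw [hcoeff, hcoeff]
  linear_combination (X i ^ 2) ^ p * (X k ^ 2) ^ q * hinv

theorem isSumSq_agiform_two_nsmul_single_add_single (i k : σ) {p q : ℕ} (hpq : p + q ≠ 0) :
    IsSumSq (agiform K (p + q) (2 • (Finsupp.single i p + Finsupp.single k q))) := by
  rw [agiform_two_nsmul_single_add_single i k hpq]
  exact ((IsSumSq.natCast_inv _).map C).mul (isSumSq_weighted_amgm _ _ p q)

theorem isSumSq_agiform_two_nsmul {δ : σ →₀ ℕ} (hδ : δ ≠ 0) :
    IsSumSq (agiform K δ.degree (2 • δ)) := by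
  induction hN : #δ.support using Nat.strong_induction_on generalizing δ with
  | _ N ih =>
    rcases le_or_gt N 2 with hN2 | hN2
    · obtain ⟨i, k, p, q, rfl⟩ := Finsupp.exists_eq_single_add_single hδ (hN ▸ hN2)
      simpa using isSumSq_agiform_two_nsmul_single_add_single i k (by simpa using hδ)
    · obtain ⟨δ₁, δ₂, hsum, hdeg₁, hdeg₂, hcard₁, hcard₂⟩ :=
        Finsupp.exists_add_eq_two_nsmul_of_two_lt_card δ (hN ▸ hN2)
      have hne (δ' : σ →₀ ℕ) (h : δ'.degree = δ.degree) : δ' ≠ 0 := by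
        rintro rfl
        exact hδ ((Finsupp.degree_eq_zero_iff δ).1 (by simp [← h]))
      rw [← hsum]
      exact isSumSq_agiform_add (hdeg₁ ▸ ih _ (hN ▸ hcard₁) (hne δ₁ hdeg₁) rfl)
        (hdeg₂ ▸ ih _ (hN ▸ hcard₂) (hne δ₂ hdeg₂) rfl)

theorem isSumSq_agiform {e : ℕ} (he : e ≠ 0) {ν : σ →₀ ℕ} (hν : ν.degree = 2 * e) :
    IsSumSq (agiform K e ν) := by
  obtain ⟨γ, hγν, hγ⟩ := Finsupp.exists_le_degree_eq ν e (by omega)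
  obtain ⟨γ', rfl⟩ := le_iff_exists_add.1 hγν
  have hγ' : γ'.degree = e := by rw [map_add] at hν; omega
  have hne (δ : σ →₀ ℕ) (h : δ.degree = e) : δ ≠ 0 := by
    rintro rfl
    simp at h
    omega
  exact isSumSq_agiform_add (hγ ▸ isSumSq_agiform_two_nsmul (hne γ hγ))
    (hγ' ▸ isSumSq_agiform_two_nsmul (hne γ' hγ'))

end Agiform

section Weights

variable {σ : Type*} [Fintype σ]

theorem prod_pow_update_neg {R : Type*} [CommRing R] [DecidableEq σ] (t : σ → R) (α : σ → ℕ)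
    {j : σ} (hj : Odd (α j)) :
    ∏ i, Function.update t j (-t j) i ^ α i = -∏ i, t i ^ α i := by
  rw [← mul_prod_erase _ _ (mem_univ j), ← mul_prod_erase _ (fun i => t i ^ α i) (mem_univ j),
    Function.update_self, hj.neg_pow, neg_mul]
  congr 2
  exact prod_congr rfl fun i hi => by rw [Function.update_of_ne (ne_of_mem_erase hi)]

theorem exists_eq_mul_prod_pow_of_abs_le {K : Type*} [Field K] [LinearOrder K]
    [IsStrictOrderedRing K] {t : σ → K} {α : σ → ℕ} {μ : K}
    (hμ : |μ| ≤ ∏ i, t i ^ α i) (hpar : (∀ i, Even (α i)) → 0 ≤ μ) :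
    ∃ t' : σ → K, (∀ i, |t' i| = |t i|) ∧
      ∃ l : K, 0 ≤ l ∧ l ≤ 1 ∧ μ = l * ∏ i, t' i ^ α i := by
  classical
  generalize hc_def : ∏ i, t i ^ α i = c at hμ
  rcases ((abs_nonneg μ).trans hμ).eq_or_lt with hc | hc
  · exact ⟨t, fun _ => rfl, 0, le_rfl, zero_le_one, by simpa [← hc] using hμ⟩
  rcases le_or_gt 0 μ with hμ0 | hμ0
  · refine ⟨t, fun _ => rfl, μ / c, div_nonneg hμ0 hc.le, ?_, ?_⟩
    · exact (div_le_one hc).2 ((le_abs_self μ).trans hμ)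
    · rw [hc_def, div_mul_cancel₀ μ hc.ne']
  · obtain ⟨j, hj⟩ : ∃ j, Odd (α j) := by
      by_contra! h
      exact hμ0.not_ge (hpar fun i => Nat.not_odd_iff_even.1 (h i))
    refine ⟨Function.update t j (-t j), fun i => ?_, -μ / c, div_nonneg (by linarith) hc.le, ?_, ?_⟩
    · rcases eq_or_ne i j with rfl | hij
      · simp
      · simp [hij]
    · exact (div_le_one hc).2 ((neg_le_abs μ).trans hμ)
    · rw [prod_pow_update_neg t α hj, hc_def, neg_div, neg_mul_neg, div_mul_cancel₀ μ hc.ne']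

theorem exists_abs_le_prod_pow_of_pow_mul_prod_le {d : ℕ} (hd : d ≠ 0) {α : σ → ℕ}
    (hα : ∑ i, α i = 2 * d) {β : σ → ℝ} (hβ : ∀ i, 0 ≤ β i) {μ : ℝ}
    (hineq : μ ^ (2 * d) * ∏ i, (α i : ℝ) ^ α i ≤ ((2 * d : ℕ) : ℝ) ^ (2 * d) * ∏ i, β i ^ α i) :
    ∃ t : σ → ℝ, (∀ i, α i / (2 * d : ℝ) * t i ^ (2 * d) ≤ β i) ∧ |μ| ≤ ∏ i, t i ^ α i := by
  set t : σ → ℝ := fun i => (2 * d * β i / α i) ^ ((2 * d : ℕ) : ℝ)⁻¹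
  have ht : ∀ i, 0 ≤ t i := fun i => Real.rpow_nonneg (by have := hβ i; positivity) _
  have hpow : ∀ i, α i ≠ 0 → α i / (2 * d : ℝ) * t i ^ (2 * d) = β i := fun i hi => by
    rw [Real.rpow_inv_natCast_pow (by have := hβ i; positivity) (by omega)]
    field_simp
  refine ⟨t, fun i => ?_, ?_⟩
  · rcases eq_or_ne (α i) 0 with hi | hi
    · simp [hi, hβ i]
    · exact (hpow i hi).le
  have hprod : (∏ i, t i ^ α i) ^ (2 * d) * ∏ i, (α i : ℝ) ^ α i
      = ((2 * d : ℕ) : ℝ) ^ (2 * d) * ∏ i, β i ^ α i := calc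
    _ = ∏ i, (α i * t i ^ (2 * d)) ^ α i := by
      rw [← prod_pow, ← prod_mul_distrib]
      exact prod_congr rfl fun i _ => by ring
    _ = ∏ i, ((2 * d : ℕ) * β i) ^ α i := prod_congr rfl fun i _ => by
      rcases eq_or_ne (α i) 0 with hi | hi
      · simp [hi]
      · rw [← hpow i hi]
        push_cast
        field_simp
    _ = ((2 * d : ℕ) : ℝ) ^ (2 * d) * ∏ i, β i ^ α i := by
      simp only [mul_pow, prod_mul_distrib, prod_pow_eq_pow_sum, hα]
  have hP : 0 < ∏ i, (α i : ℝ) ^ α i := prod_pos fun i _ => by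
    rcases eq_or_ne (α i) 0 with hi | hi
    · simp [hi]
    · positivity
  rw [← hprod] at hineq
  rw [← pow_le_pow_iff_left₀ (abs_nonneg μ) (prod_nonneg fun i _ => pow_nonneg (ht i) _)
    (by omega : 2 * d ≠ 0), (even_two_mul d).pow_abs]
  exact le_of_mul_le_mul_right hineq hP

theorem isSumSq_sub_C_mul_monomial_of_scaling {d : ℕ} (hd : d ≠ 0) {α : σ →₀ ℕ}
    (hα : α.degree = 2 * d) (β : σ → ℝ) {μ : ℝ} (t : σ → ℝ) {l : ℝ} (hl : 0 ≤ l)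
    (hμ : μ = l * ∏ i, t i ^ α i) (hβ : ∀ i, l * (α i / (2 * d) * t i ^ (2 * d)) ≤ β i) :
    IsSumSq (∑ i, C (β i) * X i ^ (2 * d) - C μ * monomial α 1) := by
  have hdiag : IsSumSq (∑ i, C (β i - l * (α i / (2 * d) * t i ^ (2 * d))) * X i ^ (2 * d)) :=
    .sum fun i _ => (((Real.isSquare_iff.2 (sub_nonneg.2 (hβ i))).map C).mul
      ((even_two_mul d).isSquare_pow _)).isSumSq
  have hscaled := (isSumSq_agiform (K := ℝ) hd hα).map (aeval fun i => C (t i) * X i)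
  rw [aeval_C_mul_X_agiform] at hscaled
  refine (congrArg IsSumSq ?_).mpr
    ((((Real.isSquare_iff.2 hl).map C).isSumSq.mul hscaled).add hdiag)
  rw [hμ, mul_sub, mul_sum, sub_add_eq_add_sub, ← sum_add_distrib, ← mul_assoc, ← C_mul]
  congr 2 with i
  rw [← mul_assoc, ← C_mul, ← add_mul, ← C_add, add_sub_cancel]

end Weights

/-- Fidalgo–Kovacec: if `μ^{2d}·Π α_i^{α_i} ≤ (2d)^{2d}·Π β_i^{α_i}` then
`Σ β_i X_i^{2d} − μ·X^α` is a sum of squares.  (Convention `0^0 = 1`.) -/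
theorem fidalgo_kovacec_sos {n d : ℕ} (hd : 1 ≤ d) (α : Fin n →₀ ℕ)
    (hα : ∑ i, α i = 2 * d) (β : Fin n → ℝ) (μ : ℝ)
    (hβ : ∀ i, 0 ≤ β i) (hμ : (∀ i, Even (α i)) → 0 ≤ μ)
    (hineq : μ ^ (2 * d) * ∏ i, (α i : ℝ) ^ (α i)
      ≤ ((2 * d : ℕ) : ℝ) ^ (2 * d) * ∏ i, (β i) ^ (α i)) :
    IsSumSq (∑ i, C (β i) * X i ^ (2 * d) - C μ * monomial α (1 : ℝ)) := by
  have hd0 : d ≠ 0 := by omega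
  obtain ⟨t, hβt, hμt⟩ := exists_abs_le_prod_pow_of_pow_mul_prod_le hd0 hα hβ hineq
  obtain ⟨t', ht', l, hl0, hl1, hμl⟩ := exists_eq_mul_prod_pow_of_abs_le hμt hμ
  refine isSumSq_sub_C_mul_monomial_of_scaling hd0 (by rwa [Finsupp.degree_eq_sum]) β t' hl0 hμl
    fun i => ?_
  calc l * (α i / (2 * d) * t' i ^ (2 * d))
      = l * (α i / (2 * d) * t i ^ (2 * d)) := by
        rw [← (even_two_mul d).pow_abs, ht', (even_two_mul d).pow_abs]
    _ ≤ α i / (2 * d) * t i ^ (2 * d) :=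
        mul_le_of_le_one_left (mul_nonneg (by positivity) ((even_two_mul d).pow_nonneg _)) hl1
    _ ≤ β i := hβt i
end

section
/- Let p(X) = Σ_{i=1}^n β_i X_i^{2d} − μ·X^α where α ∈ ℕ^n, |α| = 2d, β_i ≥ 0 for all i, and μ ≥ 0 if all α_i are even. If p(x) ≥ 0 for all x ∈ ℝ^n, then μ^{2d}·Π_{i=1}^n α_i^{α_i} ≤ (2d)^{2d}·Π_{i=1}^n β_i^{α_i}. -/
/-!
Positive semidefiniteness says `μ x^α ≤ Σ β_i x_i^{2d}` for every `x`. If `μ < 0`, some `α_i` is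
odd, and flipping the sign of `x_i` turns this into the same bound for `|μ|`. When every `β_i` is
positive, the point `x_i = (α_i / β_i)^{1/2d}` makes the right-hand side equal to `Σ α_i = 2d`, and
raising `|μ| x^α ≤ 2d` to the power `2d` gives the inequality. Vanishing `β_i` are handled by
replacing `β` with `β + ε` and letting `ε → 0`.
-/

open MvPolynomial

section

variable {ι : Type*} [Fintype ι]

theorem eval_sum_C_mul_X_pow_sub_C_mul_monomial (β : ι → ℝ) (μ : ℝ) (N : ℕ) (α : ι →₀ ℕ)
    (x : ι → ℝ) :
    eval x (∑ i, C (β i) * X i ^ N - C μ * monomial α (1 : ℝ)) =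
      ∑ i, β i * x i ^ N - μ * ∏ i, x i ^ α i := by
  simp [eval_monomial, Finsupp.prod_fintype]

theorem prod_update_neg_pow_of_odd [DecidableEq ι] (x : ι → ℝ) (α : ι → ℕ) {i : ι}
    (hi : Odd (α i)) :
    ∏ j, Function.update x i (-x i) j ^ α j = -∏ j, x j ^ α j := by
  have hupd : (fun j => Function.update x i (-x i) j ^ α j) =
      Function.update (fun j => x j ^ α j) i ((-x i) ^ α i) :=
    funext <| Function.apply_update (fun j (y : ℝ) => y ^ α j) x i (-x i)
  rw [hupd, Finset.prod_update_of_mem (Finset.mem_univ i), hi.neg_pow,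
    ← Finset.mul_prod_erase _ _ (Finset.mem_univ i), Finset.sdiff_singleton_eq_erase, neg_mul]

theorem sum_mul_update_neg_pow_of_even [DecidableEq ι] (x β : ι → ℝ) {N : ℕ} (hN : Even N)
    (i : ι) :
    ∑ j, β j * Function.update x i (-x i) j ^ N = ∑ j, β j * x j ^ N := by
  refine Finset.sum_congr rfl fun j _ => ?_
  rcases eq_or_ne j i with rfl | hj
  · rw [Function.update_self, hN.neg_pow]
  · rw [Function.update_of_ne hj]

theorem abs_mul_prod_pow_le_sum_mul_pow {α : ι → ℕ} {β : ι → ℝ} {μ : ℝ} {N : ℕ} (hN : Even N)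
    (hμ : (∀ i, Even (α i)) → 0 ≤ μ) (h : ∀ x : ι → ℝ, μ * ∏ i, x i ^ α i ≤ ∑ i, β i * x i ^ N)
    (x : ι → ℝ) : |μ| * ∏ i, x i ^ α i ≤ ∑ i, β i * x i ^ N := by
  classical
  rcases le_or_gt 0 μ with hμ0 | hμ0
  · rw [abs_of_nonneg hμ0]
    exact h x
  obtain ⟨i, hi⟩ : ∃ i, Odd (α i) := by
    by_contra! hall
    exact hμ0.not_ge (hμ fun i => Nat.not_odd_iff_even.mp (hall i))
  have := h (Function.update x i (-x i))
  rw [prod_update_neg_pow_of_odd x α hi, sum_mul_update_neg_pow_of_even x β hN] at this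
  rw [abs_of_neg hμ0]
  linarith

theorem pow_mul_prod_pow_self_le_of_pos {α : ι → ℕ} {β : ι → ℝ} {μ : ℝ} {N : ℕ}
    (hα : ∑ i, α i = N) (hβ : ∀ i, 0 < β i) (hμ : 0 ≤ μ)
    (h : ∀ x : ι → ℝ, (∀ i, 0 ≤ x i) → μ * ∏ i, x i ^ α i ≤ ∑ i, β i * x i ^ N) :
    μ ^ N * ∏ i, (α i : ℝ) ^ α i ≤ (N : ℝ) ^ N * ∏ i, β i ^ α i := by
  obtain rfl | hN := eq_or_ne N 0
  · simp [Finset.sum_eq_zero_iff.mp hα]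
  set t : ι → ℝ := fun i => (α i / β i) ^ (N⁻¹ : ℝ)
  have hq : ∀ i, 0 ≤ (α i : ℝ) / β i := fun i => div_nonneg (Nat.cast_nonneg _) (hβ i).le
  have ht : ∀ i, 0 ≤ t i := fun i => Real.rpow_nonneg (hq i) _
  have htN : ∀ i, t i ^ N = α i / β i := fun i => Real.rpow_inv_natCast_pow (hq i) hN
  have hsum : ∑ i, β i * t i ^ N = N := by
    simp only [htN, mul_div_cancel₀ _ (hβ _).ne']
    exact_mod_cast hα
  have hprod : ∏ i, (α i : ℝ) ^ α i = (∏ i, t i ^ α i) ^ N * ∏ i, β i ^ α i := by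
    rw [← Finset.prod_pow, ← Finset.prod_mul_distrib]
    refine Finset.prod_congr rfl fun i _ => ?_
    rw [← pow_mul, mul_comm (α i) N, pow_mul, htN, div_pow,
      div_mul_cancel₀ _ (pow_ne_zero _ (hβ i).ne')]
  have hle : μ * ∏ i, t i ^ α i ≤ N := hsum ▸ h t ht
  calc μ ^ N * ∏ i, (α i : ℝ) ^ α i = (μ * ∏ i, t i ^ α i) ^ N * ∏ i, β i ^ α i := by
        rw [hprod, mul_pow, mul_assoc]
    _ ≤ (N : ℝ) ^ N * ∏ i, β i ^ α i := by
        have : 0 ≤ μ * ∏ i, t i ^ α i :=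
          mul_nonneg hμ (Finset.prod_nonneg fun i _ => pow_nonneg (ht i) _)
        gcongr
        exact Finset.prod_nonneg fun i _ => pow_nonneg (hβ i).le _

open Filter Topology in
theorem pow_mul_prod_pow_self_le {α : ι → ℕ} {β : ι → ℝ} {μ : ℝ} {N : ℕ}
    (hα : ∑ i, α i = N) (hβ : ∀ i, 0 ≤ β i) (hμ : 0 ≤ μ)
    (h : ∀ x : ι → ℝ, (∀ i, 0 ≤ x i) → μ * ∏ i, x i ^ α i ≤ ∑ i, β i * x i ^ N) :
    μ ^ N * ∏ i, (α i : ℝ) ^ α i ≤ (N : ℝ) ^ N * ∏ i, β i ^ α i := by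
  have hlim : Tendsto (fun ε : ℝ => (N : ℝ) ^ N * ∏ i, (β i + ε) ^ α i) (𝓝[>] 0)
      (𝓝 ((N : ℝ) ^ N * ∏ i, β i ^ α i)) := by
    refine tendsto_nhdsWithin_of_tendsto_nhds (Continuous.tendsto' ?_ _ _ (by simp))
    fun_prop
  refine ge_of_tendsto hlim (eventually_nhdsWithin_of_forall fun ε (hε : 0 < ε) => ?_)
  refine pow_mul_prod_pow_self_le_of_pos hα (fun i => by linarith [hβ i]) hμ fun x hx => ?_
  calc μ * ∏ i, x i ^ α i ≤ ∑ i, β i * x i ^ N := h x hx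
    _ ≤ ∑ i, (β i + ε) * x i ^ N := by
        gcongr with i
        · exact pow_nonneg (hx i) _
        · linarith

end

theorem fidalgo_kovacec_psd_implies_ineq_general {n d : ℕ} (α : Fin n →₀ ℕ)
    (hα : ∑ i, α i = 2 * d) (β : Fin n → ℝ) (μ : ℝ)
    (hβ : ∀ i, 0 ≤ β i) (hμ : (∀ i, Even (α i)) → 0 ≤ μ)
    (hpsd : ∀ x : Fin n → ℝ,
      0 ≤ eval x (∑ i, C (β i) * X i ^ (2 * d) - C μ * monomial α (1 : ℝ))) :
    μ ^ (2 * d) * ∏ i, (α i : ℝ) ^ (α i)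
      ≤ ((2 * d : ℕ) : ℝ) ^ (2 * d) * ∏ i, (β i) ^ (α i) := by
  have hdom : ∀ x : Fin n → ℝ, μ * ∏ i, x i ^ α i ≤ ∑ i, β i * x i ^ (2 * d) := fun x => by
    have := hpsd x
    rwa [eval_sum_C_mul_X_pow_sub_C_mul_monomial, sub_nonneg] at this
  rw [← (even_two_mul d).pow_abs]
  exact pow_mul_prod_pow_self_le hα hβ (abs_nonneg μ) fun x _ =>
    abs_mul_prod_pow_le_sum_mul_pow (even_two_mul d) hμ hdom x

/-- Fidalgo–Kovacec (converse direction): if the form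
`Σ β_i X_i^{2d} − μ·X^α` is positive semidefinite on `ℝ^n`, then
`μ^{2d}·Π α_i^{α_i} ≤ (2d)^{2d}·Π β_i^{α_i}`.  (Convention `0^0 = 1`.) -/
theorem fidalgo_kovacec_psd_implies_ineq {n d : ℕ} (hd : 1 ≤ d) (α : Fin n →₀ ℕ)
    (hα : ∑ i, α i = 2 * d) (β : Fin n → ℝ) (μ : ℝ)
    (hβ : ∀ i, 0 ≤ β i) (hμ : (∀ i, Even (α i)) → 0 ≤ μ)
    (hpsd : ∀ x : Fin n → ℝ,
      0 ≤ eval x (∑ i, C (β i) * X i ^ (2 * d) - C μ * monomial α (1 : ℝ))) :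
    μ ^ (2 * d) * ∏ i, (α i : ℝ) ^ (α i)
      ≤ ((2 * d : ℕ) : ℝ) ^ (2 * d) * ∏ i, (β i) ^ (α i) :=
  fidalgo_kovacec_psd_implies_ineq_general α hα β μ hβ hμ hpsd
end

section
/- A polynomial f ∈ ℝ[X_1,...,X_n] of even degree 2d is a sum of squares if and only if its homogenization f̄(X,Y) = Y^{2d}·f(X_1/Y,...,X_n/Y) is a sum of squares in ℝ[X_1,...,X_n,Y]. -/
open MvPolynomial

/-- The homogenization `f̄ = Σ_α f_α X^α Y^{2d−|α|}` of `f`, where the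
homogenizing variable `Y` is the variable of index `0` in `Fin (n+1)`. -/
noncomputable def homogenize {n : ℕ} (d : ℕ) (f : MvPolynomial (Fin n) ℝ) :
    MvPolynomial (Fin (n + 1)) ℝ :=
  ∑ α ∈ f.support,
    monomial (Finsupp.cons (2 * d - ∑ i, α i) α) (f.coeff α)

/-!
If `f = ∑ gᵢ²`, the leading coefficient (for any monomial order) of every nonzero sum of squares
over an ordered ring is positive, so the leading terms of the `gᵢ²` cannot cancel and
`deg gᵢ ≤ d`. Homogenization to a fixed degree is multiplicative on polynomials of bounded
degree, since a form of degree `k` is the homogenization of its dehomogenization `Y ↦ 1`;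
hence `f̄ = ∑ (ḡᵢ)²`. Conversely, dehomogenization is a ring homomorphism sending `f̄` to `f`.
-/

theorem Finsupp.degree_cons {n : ℕ} {M : Type*} [AddCommMonoid M] (a : M) (s : Fin n →₀ M) :
    (Finsupp.cons a s).degree = a + s.degree := by
  simp [Finsupp.degree_eq_sum, Fin.sum_univ_succ]

theorem IsSumSq.map_s6 {R S F : Type*} [NonUnitalNonAssocSemiring R] [NonUnitalNonAssocSemiring S]
    [FunLike F R S] [NonUnitalRingHomClass F R S] (f : F) {a : R} (h : IsSumSq a) :
    IsSumSq (f a) := by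
  induction h with
  | zero => simp
  | sq_add b _ ih => simpa using ih.sq_add (f b)

namespace MonomialOrder

variable {σ R : Type*} {m : MonomialOrder σ}

theorem coeff_nonneg_of_degree_le [CommSemiring R] [Preorder R] {p : MvPolynomial σ R}
    {D : σ →₀ ℕ} (hp : 0 ≤ m.leadingCoeff p) (h : m.degree p ≼[m] D) : 0 ≤ p.coeff D := by
  rcases h.eq_or_lt with h | h
  · rwa [← m.toSyn.injective h]
  · rw [m.coeff_eq_zero_of_lt h]

variable [CommRing R] [LinearOrder R] [IsStrictOrderedRing R] {p q : MvPolynomial σ R}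

theorem degree_le_degree_add_of_leadingCoeff_nonneg (hp : 0 ≤ m.leadingCoeff p)
    (hq : 0 ≤ m.leadingCoeff q) : m.degree p ≼[m] m.degree (p + q) := by
  rcases eq_or_ne p 0 with rfl | hp0
  · simp
  rcases lt_or_ge (m.toSyn (m.degree p)) (m.toSyn (m.degree q)) with hlt | hle
  · rw [degree_add_eq_right_of_lt hlt]
    exact hlt.le
  · apply m.le_degree
    rw [mem_support_iff, coeff_add]
    exact (add_pos_of_pos_of_nonneg (hp.lt_of_ne' (m.leadingCoeff_ne_zero_iff.mpr hp0))
      (coeff_nonneg_of_degree_le hq hle)).ne'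

theorem leadingCoeff_add_nonneg (hp : 0 ≤ m.leadingCoeff p) (hq : 0 ≤ m.leadingCoeff q) :
    0 ≤ m.leadingCoeff (p + q) := by
  rw [leadingCoeff, coeff_add]
  refine add_nonneg (coeff_nonneg_of_degree_le hp ?_) (coeff_nonneg_of_degree_le hq ?_)
  · exact degree_le_degree_add_of_leadingCoeff_nonneg hp hq
  · rw [add_comm]
    exact degree_le_degree_add_of_leadingCoeff_nonneg hq hp

theorem leadingCoeff_nonneg_of_isSumSq (hp : IsSumSq p) : 0 ≤ m.leadingCoeff p := by
  induction hp with
  | zero => simp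
  | sq_add a _ ih => exact leadingCoeff_add_nonneg (by simpa using mul_self_nonneg _) ih

theorem degree_le_degree_add_of_isSumSq (hp : IsSumSq p) (hq : IsSumSq q) :
    m.degree p ≼[m] m.degree (p + q) :=
  degree_le_degree_add_of_leadingCoeff_nonneg (leadingCoeff_nonneg_of_isSumSq hp)
    (leadingCoeff_nonneg_of_isSumSq hq)

end MonomialOrder

namespace MvPolynomial

theorem totalDegree_le_totalDegree_add_of_isSumSq {σ R : Type*} [LinearOrder σ] [WellFoundedGT σ]
    [CommRing R] [LinearOrder R] [IsStrictOrderedRing R] {p q : MvPolynomial σ R}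
    (hp : IsSumSq p) (hq : IsSumSq q) : p.totalDegree ≤ (p + q).totalDegree :=
  degLex_totalDegree_monotone (MonomialOrder.degree_le_degree_add_of_isSumSq hp hq)

section Homogenization

variable {R : Type*} [CommSemiring R] {n : ℕ}

noncomputable def dehomogenize : MvPolynomial (Fin (n + 1)) R →ₐ[R] MvPolynomial (Fin n) R :=
  aeval (Fin.cons 1 X)

theorem dehomogenize_monomial (β : Fin (n + 1) →₀ ℕ) (c : R) :
    dehomogenize (monomial β c) = monomial β.tail c := by
  simp [dehomogenize, monomial_eq, Finsupp.prod_fintype, Fin.prod_univ_succ,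
    Finsupp.tail_apply, algebraMap_eq]

noncomputable def homogenization (k : ℕ) :
    MvPolynomial (Fin n) R →ₗ[R] MvPolynomial (Fin (n + 1)) R :=
  (basisMonomials (Fin n) R).constr R fun α => monomial (Finsupp.cons (k - α.degree) α) 1

theorem homogenization_monomial (k : ℕ) (α : Fin n →₀ ℕ) (c : R) :
    homogenization k (monomial α c) = monomial (Finsupp.cons (k - α.degree) α) c := by
  rw [← mul_one c, ← smul_eq_mul, ← smul_monomial, map_smul, ← smul_monomial]
  congr 1
  have := (basisMonomials (Fin n) R).constr_basis R
    (fun α => monomial (Finsupp.cons (k - α.degree) α) (1 : R)) α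
  rwa [coe_basisMonomials] at this

theorem isHomogeneous_homogenization {k : ℕ} {p : MvPolynomial (Fin n) R}
    (hp : p.totalDegree ≤ k) : (homogenization k p).IsHomogeneous k := by
  rw [p.as_sum, map_sum]
  refine IsHomogeneous.sum _ _ _ fun α hα => ?_
  rw [homogenization_monomial]
  apply isHomogeneous_monomial
  have : α.degree ≤ k := (le_totalDegree hα).trans hp
  rw [Finsupp.degree_cons]
  omega

theorem dehomogenize_homogenization (k : ℕ) (p : MvPolynomial (Fin n) R) :
    dehomogenize (homogenization k p) = p := by
  have : (dehomogenize (R := R) (n := n)).toLinearMap ∘ₗ homogenization k = LinearMap.id :=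
    linearMap_ext fun α => LinearMap.ext fun c => by
      simp [homogenization_monomial, dehomogenize_monomial]
  exact LinearMap.congr_fun this p

theorem homogenization_dehomogenize {k : ℕ} {P : MvPolynomial (Fin (n + 1)) R}
    (hP : P.IsHomogeneous k) : homogenization k (dehomogenize P) = P := by
  rw [P.as_sum, map_sum, map_sum]
  refine Finset.sum_congr rfl fun β hβ => ?_
  rw [dehomogenize_monomial, homogenization_monomial]
  have hβk : β.degree = k := by
    rw [Finsupp.degree_eq_weight_one]
    exact hP (mem_support_iff.mp hβ)
  rw [← Finsupp.cons_tail β, Finsupp.degree_cons] at hβk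
  rw [show k - β.tail.degree = β 0 by omega, Finsupp.cons_tail]

theorem homogenization_mul {i j : ℕ} {p q : MvPolynomial (Fin n) R} (hp : p.totalDegree ≤ i)
    (hq : q.totalDegree ≤ j) :
    homogenization (i + j) (p * q) = homogenization i p * homogenization j q := by
  rw [← homogenization_dehomogenize
    ((isHomogeneous_homogenization hp).mul (isHomogeneous_homogenization hq)),
    map_mul dehomogenize, dehomogenize_homogenization, dehomogenize_homogenization]

end Homogenization

theorem isSumSq_homogenization {R : Type*} [CommRing R] [LinearOrder R] [IsStrictOrderedRing R]
    {n k : ℕ} {p : MvPolynomial (Fin n) R} (hp : IsSumSq p) (hk : p.totalDegree ≤ 2 * k) :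
    IsSumSq (homogenization (2 * k) p) := by
  induction hp with
  | zero => simp
  | @sq_add a s hs ih =>
    have ha : a.totalDegree ≤ k := by
      rcases eq_or_ne a 0 with rfl | ha0
      · simp
      have := (totalDegree_le_totalDegree_add_of_isSumSq (.mul_self a) hs).trans hk
      rw [totalDegree_mul_of_isDomain ha0 ha0] at this
      omega
    have hs' : s.totalDegree ≤ 2 * k := by
      rw [add_comm] at hk
      exact (totalDegree_le_totalDegree_add_of_isSumSq hs (.mul_self a)).trans hk
    rw [map_add, two_mul, homogenization_mul ha ha, ← two_mul]
    exact (ih hs').sq_add _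

theorem homogenize_eq_homogenization {n : ℕ} (d : ℕ) (f : MvPolynomial (Fin n) ℝ) :
    homogenize d f = homogenization (2 * d) f := by
  conv_rhs => rw [f.as_sum, map_sum]
  simp only [homogenize, homogenization_monomial, Finsupp.degree_eq_sum]

end MvPolynomial

theorem sos_iff_homogenize_sos_general {n d : ℕ} (f : MvPolynomial (Fin n) ℝ)
    (hdeg : f.totalDegree = 2 * d) :
    IsSumSq f ↔ IsSumSq (homogenize d f) := by
  rw [homogenize_eq_homogenization]
  refine ⟨fun h => isSumSq_homogenization h hdeg.le, fun h => ?_⟩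
  simpa only [dehomogenize_homogenization] using h.map_s6 dehomogenize

/-- A nonzero polynomial `f` of even degree `2d` is a sum of squares iff its
homogenization is a sum of squares in `ℝ[X_1,…,X_n,Y]`. -/
theorem sos_iff_homogenize_sos {n d : ℕ} (f : MvPolynomial (Fin n) ℝ)
    (hf : f ≠ 0) (hdeg : f.totalDegree = 2 * d) :
    IsSumSq f ↔ IsSumSq (homogenize d f) :=
  sos_iff_homogenize_sos_general f hdeg
end

section
/- Let f = Σ_α f_α X^α be a form of degree 2d in ℝ[X_1,...,X_n], and let Δ be the set of exponents α (other than the 2d·e_i) such that f_α X^α is not a square, i.e., f_α < 0 or some α_i is odd. Suppose there exist nonnegative reals a_{α,i} (α ∈ Δ, 1 ≤ i ≤ n) such that (1) (2d)^{2d}·Π_i a_{α,i}^{α_i} = f_α^{2d}·Π_i α_i^{α_i} for all α ∈ Δ, and (2) f_{2d,i} ≥ Σ_{α∈Δ} a_{α,i} for each i, where f_{2d,i} is the coefficient of X_i^{2d} in f. Then f is a sum of squares. -/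
/-!
For `|α| = 2d`, Hurwitz's form `Σ αᵢ xᵢ^{2d} - 2d x^α` is a sum of squares: splitting
`α = β + γ` with `|β| = |γ| = d` writes it as the weighted AM–GM defects of the squares `xᵢ²`
with weights `β` and `γ`, plus `d (x^β - x^γ)²`. The AM–GM defect `Σ βᵢ uᵢ^m - m ∏ uᵢ^βᵢ`
(`m = |β|`) of sums of squares `uᵢ` is a sum of squares: merging the weights of two variables
expresses it through defects with smaller support and the two-variable defect
`p u^(p+q) + q v^(p+q) - (p+q) u^p v^q`, which satisfies simple recursions in `p` and `q`.

For `α ∈ Δ`, substituting `xᵢ = sᵢ Xᵢ` with `αᵢ sᵢ^{2d} = 2d a_{α,i}` and `∏ sᵢ^αᵢ = -f_α`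
(possible by (1), after flipping the sign of a variable of odd exponent when `f_α > 0`) shows
that `Σᵢ a_{α,i} Xᵢ^{2d} + f_α X^α` is a sum of squares. By (2), subtracting these from `f`
leaves a nonnegative combination of monomials with even exponents.
-/

open MvPolynomial

section CommSemiring

variable {R : Type*} [CommSemiring R]

theorem IsSumSq.pow {s : R} (h : IsSumSq s) (n : ℕ) : IsSumSq (s ^ n) := by
  simpa using pow_mem (Subsemiring.mem_sumSq.mpr h) n

theorem IsSumSq.nsmul {s : R} (h : IsSumSq s) (n : ℕ) : IsSumSq (n • s) := by
  simpa [nsmul_eq_mul] using (IsSumSq.natCast n).mul h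

end CommSemiring

section CommRing

variable {R : Type*} [CommRing R]

theorem IsSumSq.of_nsmul [Algebra ℚ R] {s : R} {n : ℕ} (hn : n ≠ 0) (h : IsSumSq (n • s)) :
    IsSumSq s := by
  set q := algebraMap ℚ R (n : ℚ)⁻¹
  have hq : (n : R) * q = 1 := by
    rw [← map_natCast (algebraMap ℚ R), ← map_mul, mul_inv_cancel₀ (by exact_mod_cast hn),
      map_one]
  have hs : s = n • (q * q) * (n • s) := by
    simp only [nsmul_eq_mul]
    linear_combination (-((n : R) * q + 1) * s) * hq
  rw [hs]
  exact ((IsSumSq.mul_self q).nsmul n).mul h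

theorem isSumSq_sub_mul_pow_sub_pow {u v : R} (hu : IsSumSq u) (hv : IsSumSq v) (N : ℕ) :
    IsSumSq ((u - v) * (u ^ N - v ^ N)) := by
  induction N with
  | zero => simp
  | succ N ih =>
    have h : (u - v) * (u ^ (N + 1) - v ^ (N + 1))
        = u * ((u - v) * (u ^ N - v ^ N)) + v ^ N * (u - v) ^ 2 := by ring
    rw [h]
    exact (hu.mul ih).add ((hv.pow N).mul (IsSquare.sq _).isSumSq)

theorem isSumSq_amgm_two {u v : R} (hu : IsSumSq u) (hv : IsSumSq v) (p q : ℕ) :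
    IsSumSq (p • u ^ (p + q) + q • v ^ (p + q) - (p + q) • (u ^ p * v ^ q)) := by
  have hshift : ∀ p q, IsSumSq (u ^ (p + 1) * (u ^ q - v ^ q) - q • (v ^ (p + q) * (u - v))) := by
    intro p q
    induction q with
    | zero => simp
    | succ q ih =>
      have h : u ^ (p + 1) * (u ^ (q + 1) - v ^ (q + 1)) - (q + 1) • (v ^ (p + (q + 1)) * (u - v))
          = v * (u ^ (p + 1) * (u ^ q - v ^ q) - q • (v ^ (p + q) * (u - v)))
            + (u - v) * (u ^ (p + q + 1) - v ^ (p + q + 1)) := by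
        simp only [nsmul_eq_mul]
        push_cast
        ring
      rw [h]
      exact (hv.mul ih).add (isSumSq_sub_mul_pow_sub_pow hu hv _)
  induction p with
  | zero => simp
  | succ p ih =>
    have h : (p + 1) • u ^ (p + 1 + q) + q • v ^ (p + 1 + q) - (p + 1 + q) • (u ^ (p + 1) * v ^ q)
        = u * (p • u ^ (p + q) + q • v ^ (p + q) - (p + q) • (u ^ p * v ^ q))
          + (u ^ (p + 1) * (u ^ q - v ^ q) - q • (v ^ (p + q) * (u - v))) := by
      simp only [nsmul_eq_mul]
      push_cast
      ring
    rw [h]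
    exact (hu.mul ih).add (hshift p q)

variable {ι : Type*}

/-- With `u = X` and `m = |β| = 2d` this is Hurwitz's form `Σ βᵢ Xᵢ^{2d} - 2d X^β`. -/
def amgmDefect (u : ι → R) (m : ℕ) (β : ι →₀ ℕ) : R :=
  β.sum (fun i k => k • u i ^ m) - m • β.prod (fun i k => u i ^ k)

theorem amgmDefect_merge (u : ι → R) (m : ℕ) (i j : ι) (a b : ℕ) (β : ι →₀ ℕ) :
    (a + b) • amgmDefect u m (Finsupp.single i a + (Finsupp.single j b + β))
      = a • amgmDefect u m (Finsupp.single i (a + b) + β)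
        + b • amgmDefect u m (Finsupp.single j (a + b) + β)
        + m • (β.prod (fun i k => u i ^ k)
          * (a • u i ^ (a + b) + b • u j ^ (a + b) - (a + b) • (u i ^ a * u j ^ b))) := by
  classical
  simp only [amgmDefect, Finsupp.sum_add_index', Finsupp.prod_add_index', Finsupp.sum_single_index,
    Finsupp.prod_single_index, zero_smul, pow_zero, add_smul, pow_add, implies_true]
  simp only [nsmul_eq_mul]
  ring

theorem isSumSq_amgmDefect [Algebra ℚ R] {u : ι → R} (hu : ∀ i, IsSumSq (u i)) (β : ι →₀ ℕ) :
    IsSumSq (amgmDefect u β.degree β) := by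
  classical
  generalize hm : β.degree = m
  induction hc : β.support.card using Nat.strong_induction_on generalizing β with
  | _ c ih =>
  by_cases hij : ∃ i ∈ β.support, ∃ j ∈ β.support, i ≠ j
  · obtain ⟨i, hi, j, hj, hij⟩ := hij
    obtain ⟨a, b, β₀, ha, rfl, hβ₀⟩ : ∃ a b β₀, a ≠ 0 ∧ β = .single i a + (.single j b + β₀) ∧
        β₀.support.card + 2 = c := by
      refine ⟨β i, β j, (β.erase i).erase j, Finsupp.mem_support_iff.mp hi, ?_, ?_⟩
      · rw [← Finsupp.erase_ne hij.symm, Finsupp.single_add_erase, Finsupp.single_add_erase]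
      · have := Finset.one_lt_card.mpr ⟨i, hi, j, hj, hij⟩
        rw [Finsupp.support_erase, Finsupp.support_erase,
          Finset.card_erase_of_mem (Finset.mem_erase.mpr ⟨hij.symm, hj⟩),
          Finset.card_erase_of_mem hi]
        omega
    have hmerged : ∀ k, IsSumSq (amgmDefect u m (.single k (a + b) + β₀)) := by
      intro k
      refine ih _ ?_ _ ?_ rfl
      · calc _ ≤ (Finsupp.single k (a + b)).support.card + β₀.support.card :=
              (Finset.card_le_card Finsupp.support_add).trans (Finset.card_union_le _ _)
          _ < c := by
            have := Finset.card_le_card (Finsupp.support_single_subset (a := k) (b := a + b))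
            rw [Finset.card_singleton] at this
            omega
      · simp only [map_add, Finsupp.degree_single] at hm ⊢
        omega
    apply IsSumSq.of_nsmul (n := a + b) (by omega)
    rw [amgmDefect_merge]
    exact (((hmerged i).nsmul _).add ((hmerged j).nsmul _)).add
      (((IsSumSq.prod fun k _ => (hu k).pow _).mul (isSumSq_amgm_two (hu i) (hu j) _ _)).nsmul _)
  · push Not at hij
    rcases β.support.eq_empty_or_nonempty with h0 | ⟨i, hi⟩
    · rw [Finsupp.support_eq_empty] at h0
      subst h0
      simp [← hm, amgmDefect]
    · obtain ⟨b, rfl⟩ := Finsupp.support_subset_singleton'.mp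
        fun j hj => Finset.mem_singleton.mpr (hij j hj i hi)
      simp [← hm, amgmDefect]

theorem isSumSq_amgmDefect_of_degree_eq_two_mul [Algebra ℚ R] (x : ι → R) {α : ι →₀ ℕ} {d : ℕ}
    (hα : α.degree = 2 * d) : IsSumSq (amgmDefect x (2 * d) α) := by
  classical
  obtain ⟨β, hβα, hβ⟩ := α.exists_le_degree_eq d (by omega)
  obtain ⟨γ, rfl⟩ := le_iff_exists_add.mp hβα
  have hγ : γ.degree = d := by rw [map_add] at hα; omega
  have hsq : ∀ δ : ι →₀ ℕ, δ.prod (fun i k => (x i ^ 2) ^ k) = δ.prod (fun i k => x i ^ k) ^ 2 :=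
    fun δ => by simp only [Finsupp.prod, ← Finset.prod_pow, ← pow_mul, mul_comm]
  have key : amgmDefect x (2 * d) (β + γ)
      = amgmDefect (fun i => x i ^ 2) β.degree β + amgmDefect (fun i => x i ^ 2) γ.degree γ
        + d • (β.prod (fun i k => x i ^ k) - γ.prod (fun i k => x i ^ k)) ^ 2 := by
    simp only [amgmDefect, hβ, hγ, hsq]
    simp only [← pow_mul, Finsupp.sum_add_index', Finsupp.prod_add_index', zero_smul, pow_zero,
      add_smul, pow_add, implies_true]
    simp only [nsmul_eq_mul]
    push_cast
    ring
  rw [key]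
  exact ((isSumSq_amgmDefect (fun i => (IsSquare.sq _).isSumSq) β).add
    (isSumSq_amgmDefect (fun i => (IsSquare.sq _).isSumSq) γ)).add ((IsSquare.sq _).isSumSq.nsmul _)

end CommRing

section Real

variable {σ : Type*} [Fintype σ]

theorem exists_prod_pow_eq_abs {d : ℕ} (hd : d ≠ 0) {α : σ →₀ ℕ}
    (hα : α.degree = 2 * d) {a : σ → ℝ} (ha : ∀ i, 0 ≤ a i) {c : ℝ}
    (h : ((2 * d : ℕ) : ℝ) ^ (2 * d) * ∏ i, a i ^ α i = c ^ (2 * d) * ∏ i, (α i : ℝ) ^ α i) :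
    ∃ t : σ → ℝ, (∀ i, α i * t i ^ (2 * d) ≤ 2 * d * a i) ∧ ∏ i, t i ^ α i = |c| := by
  -- `r i = 0` when `α i = 0` (`x / 0 = 0`); such factors do not enter the products below.
  set r : σ → ℝ := fun i => 2 * d * a i / α i
  have hr : ∀ i, 0 ≤ r i := fun i => div_nonneg (mul_nonneg (by positivity) (ha i)) (by positivity)
  have hn : 2 * d ≠ 0 := by omega
  have ht : ∀ i, (r i ^ ((2 * d : ℕ) : ℝ)⁻¹) ^ (2 * d) = r i :=
    fun i => Real.rpow_inv_natCast_pow (hr i) hn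
  refine ⟨fun i => r i ^ ((2 * d : ℕ) : ℝ)⁻¹, fun i => ?_, ?_⟩
  · rw [ht]
    rcases eq_or_ne (α i) 0 with h0 | h0
    · simp only [h0, CharP.cast_eq_zero, zero_mul]
      exact mul_nonneg (by positivity) (ha i)
    · exact (mul_div_cancel₀ _ (by exact_mod_cast h0)).le
  · have hr_pow : ∀ i, r i ^ α i * (α i : ℝ) ^ α i = (2 * d) ^ α i * a i ^ α i := by
      intro i
      rcases eq_or_ne (α i) 0 with h0 | h0
      · simp [h0]
      · rw [← mul_pow, div_mul_cancel₀ _ (by exact_mod_cast h0), mul_pow]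
    have hα_pos : (∏ i, (α i : ℝ) ^ α i) ≠ 0 := Finset.prod_ne_zero_iff.mpr fun i _ => by
      rcases eq_or_ne (α i) 0 with h0 | h0
      · simp [h0]
      · exact pow_ne_zero _ (by exact_mod_cast h0)
    have hr_prod :
        (∏ i, r i ^ α i) * ∏ i, (α i : ℝ) ^ α i = c ^ (2 * d) * ∏ i, (α i : ℝ) ^ α i := by
      rw [← h, ← Finset.prod_mul_distrib, Finset.prod_congr rfl fun i _ => hr_pow i,
        Finset.prod_mul_distrib, Finset.prod_pow_eq_pow_sum, ← Finsupp.degree_eq_sum, hα]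
      push_cast
      ring
    refine (pow_left_inj₀ (Finset.prod_nonneg fun i _ => ?_) (abs_nonneg c) hn).mp ?_
    · exact pow_nonneg (Real.rpow_nonneg (hr i) _) _
    calc (∏ i, (r i ^ ((2 * d : ℕ) : ℝ)⁻¹) ^ α i) ^ (2 * d) = ∏ i, r i ^ α i := by
          rw [← Finset.prod_pow]
          exact Finset.prod_congr rfl fun i _ => by rw [pow_right_comm, ht]
      _ = c ^ (2 * d) := mul_right_cancel₀ hα_pos hr_prod
      _ = |c| ^ (2 * d) := ((even_two_mul d).pow_abs c).symm

theorem exists_prod_pow_eq_neg {d : ℕ} (hd : d ≠ 0) {α : σ →₀ ℕ}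
    (hα : α.degree = 2 * d) {a : σ → ℝ} (ha : ∀ i, 0 ≤ a i) {c : ℝ}
    (hc : c ≤ 0 ∨ ∃ i, Odd (α i))
    (h : ((2 * d : ℕ) : ℝ) ^ (2 * d) * ∏ i, a i ^ α i = c ^ (2 * d) * ∏ i, (α i : ℝ) ^ α i) :
    ∃ s : σ → ℝ, (∀ i, α i * s i ^ (2 * d) ≤ 2 * d * a i) ∧ ∏ i, s i ^ α i = -c := by
  classical
  obtain ⟨t, ht, hprod⟩ := exists_prod_pow_eq_abs hd hα ha h
  rcases le_or_gt c 0 with hc0 | hc0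
  · exact ⟨t, ht, by rw [hprod, abs_of_nonpos hc0]⟩
  obtain ⟨i₀, hodd⟩ := hc.resolve_left hc0.not_ge
  refine ⟨Function.update t i₀ (-t i₀), fun i => ?_, ?_⟩
  · rcases eq_or_ne i i₀ with rfl | hi
    · rw [Function.update_self, (even_two_mul d).neg_pow]
      exact ht i
    · rw [Function.update_of_ne hi]
      exact ht i
  · rw [← Finset.mul_prod_erase _ _ (Finset.mem_univ i₀), Function.update_self, hodd.neg_pow,
      Finset.prod_congr rfl fun i hi => by rw [Function.update_of_ne (Finset.ne_of_mem_erase hi)],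
      neg_mul, Finset.mul_prod_erase _ (fun i => t i ^ α i) (Finset.mem_univ i₀), hprod,
      abs_of_pos hc0]

end Real

namespace MvPolynomial

variable {σ : Type*}

theorem isSumSq_C {r : ℝ} (hr : 0 ≤ r) : IsSumSq (C r : MvPolynomial σ ℝ) := by
  rw [← Real.mul_self_sqrt hr, map_mul]
  exact IsSumSq.mul_self _

theorem isSumSq_of_coeff_nonneg_of_even {p : MvPolynomial σ ℝ}
    (h : ∀ β ∈ p.support, 0 ≤ p.coeff β ∧ ∀ i, Even (β i)) : IsSumSq p := by
  rw [← p.support_sum_monomial_coeff]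
  refine IsSumSq.sum fun β hβ => ?_
  rw [monomial_eq]
  exact (isSumSq_C (h β hβ).1).mul
    (IsSumSq.prod fun i _ => (Even.isSquare_pow ((h β hβ).2 i) _).isSumSq)

theorem isSumSq_sum_C_mul_X_pow_add_monomial [Fintype σ] {d : ℕ} (hd : d ≠ 0) {α : σ →₀ ℕ}
    (hα : α.degree = 2 * d) {a : σ → ℝ} (ha : ∀ i, 0 ≤ a i) {c : ℝ}
    (hc : c ≤ 0 ∨ ∃ i, Odd (α i))
    (h : ((2 * d : ℕ) : ℝ) ^ (2 * d) * ∏ i, a i ^ α i = c ^ (2 * d) * ∏ i, (α i : ℝ) ^ α i) :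
    IsSumSq (∑ i, C (a i) * X i ^ (2 * d) + monomial α c) := by
  obtain ⟨s, hs, hprod⟩ := exists_prod_pow_eq_neg hd hα ha hc h
  have hterm : ∀ i, (2 * d) • (C (a i) * X i ^ (2 * d) : MvPolynomial σ ℝ)
      = α i • (C (s i) * X i) ^ (2 * d)
        + C (2 * d * a i - α i * s i ^ (2 * d)) * X i ^ (2 * d) := by
    intro i
    simp only [nsmul_eq_mul, mul_pow, map_sub, map_mul, map_pow, map_natCast, map_ofNat]
    push_cast
    ring
  have key : (2 * d) • (∑ i, C (a i) * X i ^ (2 * d) + monomial α c)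
      = amgmDefect (fun i => C (s i) * X i) (2 * d) α
        + ∑ i, C (2 * d * a i - α i * s i ^ (2 * d)) * X i ^ (2 * d) := by
    rw [amgmDefect, Finsupp.sum_fintype _ _ (by simp), Finsupp.prod_fintype _ _ (by simp),
      monomial_eq, Finsupp.prod_fintype _ _ (by simp), smul_add, Finset.smul_sum,
      Finset.sum_congr rfl fun i _ => hterm i, Finset.sum_add_distrib]
    simp only [mul_pow, Finset.prod_mul_distrib, ← map_pow, ← map_prod, hprod, map_neg]
    simp only [nsmul_eq_mul]
    ring
  refine IsSumSq.of_nsmul (n := 2 * d) (by omega) ?_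
  rw [key]
  exact (isSumSq_amgmDefect_of_degree_eq_two_mul _ hα).add (IsSumSq.sum fun i _ =>
    (isSumSq_C (by linarith [hs i])).mul (Even.isSquare_pow (even_two_mul d) _).isSumSq)

theorem isSumSq_sub_sum_diagonal_add_monomial [Fintype σ] {d : ℕ} (hd : d ≠ 0)
    (f : MvPolynomial σ ℝ) (Δ : Finset (σ →₀ ℕ)) (a : (σ →₀ ℕ) → σ → ℝ)
    (hdiag : ∀ i, Finsupp.single i (2 * d) ∉ Δ)
    (hsq : ∀ β ∈ f.support, β ∉ Δ → (¬ ∃ i, β = Finsupp.single i (2 * d)) →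
      0 ≤ f.coeff β ∧ ∀ i, Even (β i))
    (h2 : ∀ i, ∑ α ∈ Δ, a α i ≤ f.coeff (Finsupp.single i (2 * d))) :
    IsSumSq (f - ∑ α ∈ Δ, (∑ i, C (a α i) * X i ^ (2 * d) + monomial α (f.coeff α))) := by
  classical
  refine isSumSq_of_coeff_nonneg_of_even fun β hβ => ?_
  have hcoeff : (f - ∑ α ∈ Δ, (∑ i, C (a α i) * X i ^ (2 * d) + monomial α (f.coeff α))).coeff β
      = f.coeff β - ((∑ α ∈ Δ, ∑ i, if Finsupp.single i (2 * d) = β then a α i else 0)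
        + if β ∈ Δ then f.coeff β else 0) := by
    simp only [coeff_sub, coeff_sum, coeff_add, coeff_C_mul, coeff_X_pow, coeff_monomial,
      mul_ite, mul_one, mul_zero, Finset.sum_add_distrib, Finset.sum_ite_eq']
  rw [mem_support_iff, hcoeff] at hβ
  rw [hcoeff]
  by_cases hβd : ∃ j, β = Finsupp.single j (2 * d)
  · obtain ⟨j, rfl⟩ := hβd
    have hsum : ∀ α, (∑ i, if Finsupp.single i (2 * d) = Finsupp.single j (2 * d)
        then a α i else 0) = a α j := fun α => by
      simp only [Finsupp.single_left_inj (by omega : 2 * d ≠ 0), Finset.sum_ite_eq',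
        Finset.mem_univ, if_true]
    simp only [hsum, if_neg (hdiag j), add_zero]
    refine ⟨sub_nonneg.mpr (h2 j), fun i => ?_⟩
    rw [Finsupp.single_apply]
    split_ifs <;> simp
  · have hzero : ∀ α, (∑ i, if Finsupp.single i (2 * d) = β then a α i else 0) = 0 :=
      fun α => Finset.sum_eq_zero fun i _ => if_neg fun h => hβd ⟨i, h.symm⟩
    by_cases hβΔ : β ∈ Δ
    · simp only [hzero, Finset.sum_const_zero, zero_add, if_pos hβΔ, sub_self, ne_eq,
        not_true_eq_false] at hβ
    · simp only [hzero, Finset.sum_const_zero, zero_add, if_neg hβΔ, sub_zero] at hβ ⊢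
      exact hsq β (mem_support_iff.mpr hβ) hβΔ hβd

end MvPolynomial

/-- Main sufficient SOS condition (Theorem 2.3 / `SuffCnd`): let `f` be a form of
degree `2d` and let `Δ` consist of those exponents `α` of `f` (other than the
`2d·e_i`) for which `f_α X^α` is not a square.  If there are nonnegative reals
`a_{α,i}` with `(2d)^{2d}·Π a_{α,i}^{α_i} = f_α^{2d}·Π α_i^{α_i}` for all `α ∈ Δ`
and `f_{2d,i} ≥ Σ_{α∈Δ} a_{α,i}` for all `i`, then `f` is a sum of squares. -/
theorem suffCnd_sos {n d : ℕ} (hd : 1 ≤ d) (f : MvPolynomial (Fin n) ℝ)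
    (hf : f.IsHomogeneous (2 * d)) (Δ : Finset (Fin n →₀ ℕ))
    (hΔ : ∀ α, α ∈ Δ ↔ α ∈ f.support ∧ (¬ ∃ i, α = Finsupp.single i (2 * d)) ∧
      (f.coeff α < 0 ∨ ∃ i, Odd (α i)))
    (a : (Fin n →₀ ℕ) → Fin n → ℝ) (ha : ∀ α ∈ Δ, ∀ i, 0 ≤ a α i)
    (h1 : ∀ α ∈ Δ, ((2 * d : ℕ) : ℝ) ^ (2 * d) * ∏ i, (a α i) ^ (α i)
      = (f.coeff α) ^ (2 * d) * ∏ i, (α i : ℝ) ^ (α i))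
    (h2 : ∀ i, ∑ α ∈ Δ, a α i ≤ f.coeff (Finsupp.single i (2 * d))) :
    IsSumSq f := by
  have hd₀ : d ≠ 0 := by omega
  have hcross : IsSumSq (∑ α ∈ Δ, (∑ i, C (a α i) * X i ^ (2 * d) + monomial α (f.coeff α))) :=
    IsSumSq.sum fun α hα => by
      obtain ⟨hsupp, -, hc⟩ := (hΔ α).mp hα
      have hdeg : α.degree = 2 * d := by
        by_contra hne
        exact mem_support_iff.mp hsupp (hf.coeff_eq_zero hne)
      exact isSumSq_sum_C_mul_X_pow_add_monomial hd₀ hdeg (ha α hα) (hc.imp_left le_of_lt)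
        (h1 α hα)
  have hrest := isSumSq_sub_sum_diagonal_add_monomial hd₀ f Δ a
    (fun i h => ((hΔ _).mp h).2.1 ⟨i, rfl⟩)
    (fun β hβ hβΔ hβd => by
      have hsq : ¬ (f.coeff β < 0 ∨ ∃ i, Odd (β i)) := fun h => hβΔ ((hΔ β).mpr ⟨hβ, hβd, h⟩)
      simpa [Nat.not_odd_iff_even] using hsq)
    h2
  simpa using hrest.add hcross
end

section
/- Let f ∈ ℝ[X_1,...,X_n] have degree 2d, with constant term f_0, coefficient f_{2d,i} of X_i^{2d}, and let Δ be the set of exponents α ∉ {0, 2d·e_1,...,2d·e_n} with f_α ≠ 0 such that f_α X^α is not a square. If f_0 ≥ Σ_{α∈Δ} |f_α|·(2d−|α|)/(2d) and f_{2d,i} ≥ Σ_{α∈Δ} |f_α|·α_i/(2d) for each i = 1,...,n, then f is a sum of squares. -/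
/-!
For `α ∈ Δ` the term `f_α X^α` is absorbed by the AM–GM polynomial
`|f_α| / (2d) · ((2d - |α|) + Σ α_i X_i^{2d}) + f_α X^α`, which is a sum of squares
(Hurwitz, Reznick). Homogenising with an extra variable equal to `1`, it is a nonnegative multiple
of `Σ_{x ∈ s} x^{2d} ∓ 2d ∏ s` for a multiset `s` of `2d` polynomials. Splitting `s = t + u` into
halves of size `d` writes this as
`(Σ_t x^{2d} - d (∏ t)²) + (Σ_u x^{2d} - d (∏ u)²) + d (∏ t ± ∏ u)²`, and these even AM–GM
polynomials are sums of squares by induction on `d`. Subtracting all of them from `f` leaves, by the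
two hypotheses on `f_0` and `f_{2d,i}`, a polynomial whose terms have nonnegative coefficients and
even exponents, i.e. are squares.
-/

open MvPolynomial

theorem IsSumSq.smul_of_nonneg {A : Type*} [CommSemiring A] [Algebra ℝ A] {c : ℝ} (hc : 0 ≤ c)
    {a : A} (ha : IsSumSq a) : IsSumSq (c • a) := by
  rw [Algebra.smul_def, ← Real.mul_self_sqrt hc, map_mul]
  exact (IsSumSq.mul_self _).mul ha

theorem Multiset.exists_le_card_eq {α : Type*} {s : Multiset α} {n : ℕ} (hn : n ≤ card s) :
    ∃ t ≤ s, card t = n := by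
  obtain ⟨t, ht⟩ := card_pos_iff_exists_mem.mp ((card_powersetCard n s).symm ▸ Nat.choose_pos hn)
  exact ⟨t, (mem_powersetCard.mp ht).1, (mem_powersetCard.mp ht).2⟩

section AMGM

open Multiset

variable {A : Type*} [CommRing A]

theorem isSumSq_pow_add_mul_pow_sub (a b : A) (m : ℕ) :
    IsSumSq (a ^ (2 * (m + 1)) + m * b ^ (2 * (m + 1)) - (m + 1) * a ^ 2 * b ^ (2 * m)) := by
  induction m with
  | zero => simp
  | succ m ih =>
    have geom : (∑ i ∈ Finset.range (m + 1), (a ^ i * b ^ (m - i)) ^ 2) * (a ^ 2 - b ^ 2)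
        = a ^ (2 * (m + 1)) - b ^ (2 * (m + 1)) := by
      rw [pow_mul, pow_mul, ← geom_sum₂_mul (a ^ 2) (b ^ 2) (m + 1)]
      refine congrArg (· * (a ^ 2 - b ^ 2)) (Finset.sum_congr rfl fun i _ => ?_)
      rw [Nat.add_sub_cancel]
      ring
    have key : a ^ (2 * (m + 1 + 1)) + ↑(m + 1) * b ^ (2 * (m + 1 + 1))
          - (↑(m + 1) + 1) * a ^ 2 * b ^ (2 * (m + 1))
        = b ^ 2 * (a ^ (2 * (m + 1)) + m * b ^ (2 * (m + 1)) - (m + 1) * a ^ 2 * b ^ (2 * m))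
          + (a ^ 2 - b ^ 2) ^ 2 * ∑ i ∈ Finset.range (m + 1), (a ^ i * b ^ (m - i)) ^ 2 := by
      push_cast
      linear_combination (b ^ 2 - a ^ 2) * geom
    rw [key]
    exact ((IsSquare.sq _).isSumSq.mul ih).add ((IsSquare.sq _).isSumSq.mul (IsSumSq.sum_sq _ _))

variable [Algebra ℝ A]

theorem isSumSq_sum_pow_sub_card_mul_prod_sq (s : Multiset A) :
    IsSumSq ((s.map (· ^ (2 * card s))).sum - card s * s.prod ^ 2) := by
  induction s using Multiset.induction_on with
  | empty => simp
  | cons a t ih =>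
    set m := card t with hm
    rcases Nat.eq_zero_or_pos m with h0 | hm0
    · rw [card_eq_zero.mp h0]
      simp
    have hsum : (t.map fun x => a ^ (2 * (m + 1)) + m * x ^ (2 * (m + 1))
          - (m + 1) * a ^ 2 * x ^ (2 * m)).sum
        = m * a ^ (2 * (m + 1)) + m * (t.map (· ^ (2 * (m + 1)))).sum
          - (m + 1) * a ^ 2 * (t.map (· ^ (2 * m))).sum := by
      simp [sum_map_sub, sum_map_add, sum_map_mul_left, hm]
    have key : (m : ℝ) • (((a ::ₘ t).map (· ^ (2 * card (a ::ₘ t)))).sum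
          - (card (a ::ₘ t) : A) * (a ::ₘ t).prod ^ 2)
        = (m + 1) * a ^ 2 * ((t.map (· ^ (2 * m))).sum - m * t.prod ^ 2)
          + (t.map fun x => a ^ (2 * (m + 1)) + m * x ^ (2 * (m + 1))
              - (m + 1) * a ^ 2 * x ^ (2 * m)).sum := by
      rw [hsum, Nat.cast_smul_eq_nsmul, nsmul_eq_mul]
      simp only [card_cons, map_cons, sum_cons, prod_cons, ← hm]
      push_cast
      ring
    rw [← inv_smul_smul₀ (by positivity : (m : ℝ) ≠ 0) (_ - _), key]
    refine IsSumSq.smul_of_nonneg (by positivity) (IsSumSq.add ?_ ?_)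
    · exact ((Nat.cast_succ (R := A) m ▸ IsSumSq.natCast (m + 1)).mul
        (IsSquare.sq a).isSumSq).mul ih
    · refine sum_induction _ _ (fun _ _ => IsSumSq.add) IsSumSq.zero ?_
      simpa using fun x _ => isSumSq_pow_add_mul_pow_sub a x m

theorem isSumSq_sum_pow_sub_mul_prod {d : ℕ} {s : Multiset A} (hs : card s = 2 * d) {ε : A}
    (hε : ε * ε = 1) : IsSumSq ((s.map (· ^ (2 * d))).sum - 2 * d * ε * s.prod) := by
  obtain ⟨t, hts, ht⟩ := s.exists_le_card_eq (n := d) (by omega)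
  obtain ⟨u, rfl⟩ := Multiset.le_iff_exists_add.mp hts
  have hu : card u = d := by rw [card_add] at hs; omega
  have hsplit : ((t + u).map (· ^ (2 * d))).sum - 2 * d * ε * (t + u).prod
      = ((t.map (· ^ (2 * d))).sum - d * t.prod ^ 2) + ((u.map (· ^ (2 * d))).sum - d * u.prod ^ 2)
        + d * (t.prod - ε * u.prod) ^ 2 := by
    rw [map_add, sum_add, prod_add]
    linear_combination (-(d : A) * u.prod ^ 2) * hε
  have ht' := isSumSq_sum_pow_sub_card_mul_prod_sq t
  have hu' := isSumSq_sum_pow_sub_card_mul_prod_sq u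
  rw [ht] at ht'
  rw [hu] at hu'
  rw [hsplit]
  exact (ht'.add hu').add ((IsSumSq.natCast d).mul (IsSquare.sq _).isSumSq)

end AMGM

theorem Finsupp.sum_toMultiset_map {σ M : Type*} [Fintype σ] [AddCommMonoid M] (α : σ →₀ ℕ)
    (g : σ → M) : (α.toMultiset.map g).sum = ∑ i, α i • g i := by
  rw [toMultiset_map, sum_toMultiset, sum_mapDomain_index, sum_fintype]
  all_goals simp [add_smul]

theorem Finsupp.even_of_forall_even {σ : Type*} {β : σ →₀ ℕ} (h : ∀ i, Even (β i)) : Even β := by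
  refine ⟨β.mapRange (· / 2) (Nat.zero_div 2), ext fun i => ?_⟩
  obtain ⟨k, hk⟩ := h i
  simp only [add_apply, mapRange_apply]
  omega

namespace MvPolynomial

variable {σ : Type*}

theorem prod_toMultiset_map_X {R : Type*} [CommSemiring R] (α : σ →₀ ℕ) :
    (α.toMultiset.map X).prod = (monomial α 1 : MvPolynomial σ R) := by
  rw [Finsupp.toMultiset_map, Finsupp.prod_toMultiset, monic_monomial_eq,
    Finsupp.prod_mapDomain_index]
  all_goals simp [pow_add]

theorem isSumSq_of_forall_mem_support {R : Type*} [CommSemiring R] {p : MvPolynomial σ R}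
    (h : ∀ β ∈ p.support, Even β ∧ IsSquare (p.coeff β)) : IsSumSq p := by
  rw [p.as_sum]
  refine IsSumSq.sum fun β hβ => ?_
  obtain ⟨⟨γ, rfl⟩, ⟨a, ha⟩⟩ := h β hβ
  rw [ha, ← monomial_mul]
  exact IsSumSq.mul_self _

variable [Fintype σ]

open Multiset in
theorem isSumSq_sum_X_pow_add_sub_monomial {d : ℕ} {α : σ →₀ ℕ} (hα : ∑ i, α i ≤ 2 * d)
    {ε : MvPolynomial σ ℝ} (hε : ε * ε = 1) :
    IsSumSq (∑ i, (α i : MvPolynomial σ ℝ) * X i ^ (2 * d)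
      + ((2 * d - ∑ i, α i : ℕ) : MvPolynomial σ ℝ)
      - 2 * (d : MvPolynomial σ ℝ) * ε * monomial α 1) := by
  set s : Multiset (MvPolynomial σ ℝ) := α.toMultiset.map X + replicate (2 * d - ∑ i, α i) 1
  have hcard : card s = 2 * d := by
    simp only [s, card_add, card_map, Finsupp.card_toMultiset, card_replicate, id_eq,
      implies_true, Finsupp.sum_fintype]
    omega
  have hsum : (s.map (· ^ (2 * d))).sum = ∑ i, (α i : MvPolynomial σ ℝ) * X i ^ (2 * d)
      + ((2 * d - ∑ i, α i : ℕ) : MvPolynomial σ ℝ) := by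
    simp [s, Finsupp.sum_toMultiset_map, nsmul_eq_mul]
  have hprod : s.prod = monomial α 1 := by
    simp [s, prod_toMultiset_map_X]
  rw [← hsum, ← hprod]
  exact isSumSq_sum_pow_sub_mul_prod hcard hε

/-- The monomial `c X^α` completed by the AM–GM inequality with the monomials `1` and `X_i^{2d}`. -/
noncomputable def amgmTerm (d : ℕ) (c : ℝ) (α : σ →₀ ℕ) : MvPolynomial σ ℝ :=
  monomial α c + monomial 0 (|c| * ((2 * d - ∑ i, α i : ℕ) : ℝ) / ((2 * d : ℕ) : ℝ))
    + ∑ i, monomial (Finsupp.single i (2 * d)) (|c| * ((α i : ℕ) : ℝ) / ((2 * d : ℕ) : ℝ))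

theorem isSumSq_amgmTerm {d : ℕ} (hd : 0 < d) (c : ℝ) {α : σ →₀ ℕ} (hα : ∑ i, α i ≤ 2 * d) :
    IsSumSq (amgmTerm d c α) := by
  obtain ⟨e, he, hc⟩ : ∃ e : ℝ, e * e = 1 ∧ c = -(e * |c|) := by
    rcases le_or_gt 0 c with h | h
    · exact ⟨-1, by norm_num, by rw [abs_of_nonneg h]; ring⟩
    · exact ⟨1, by norm_num, by rw [abs_of_neg h]; ring⟩
  have hε : C e * C e = (1 : MvPolynomial σ ℝ) := by rw [← C_mul, he, C_1]
  rw [amgmTerm, show monomial α c = monomial α (-(e * |c|)) from congrArg _ hc]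
  have ha := abs_nonneg c
  generalize |c| = a at ha ⊢
  have key : monomial α (-(e * a)) + monomial 0 (a * ((2 * d - ∑ i, α i : ℕ) : ℝ) / (2 * d : ℕ))
        + ∑ i, monomial (Finsupp.single i (2 * d)) (a * ((α i : ℕ) : ℝ) / (2 * d : ℕ))
      = (a / (2 * d : ℕ)) • (∑ i, (α i : MvPolynomial σ ℝ) * X i ^ (2 * d)
        + ((2 * d - ∑ i, α i : ℕ) : MvPolynomial σ ℝ)
        - 2 * (d : MvPolynomial σ ℝ) * C e * monomial α 1) := by
    have hD : ((2 * d : ℕ) : ℝ) ≠ 0 := by positivity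
    rw [smul_eq_C_mul, monomial_zero', ← mul_one (-(e * a)), ← C_mul_monomial]
    simp only [← C_mul_X_pow_eq_monomial, mul_div_right_comm a,
      show -(e * a) = -(e * (2 * d : ℕ) * (a / (2 * d : ℕ))) by field_simp]
    generalize a / (2 * d : ℕ) = u
    simp only [map_mul, map_neg, map_natCast, map_ofNat, Nat.cast_mul, Nat.cast_ofNat]
    rw [mul_sub, mul_add, Finset.mul_sum]
    simp only [mul_assoc]
    ring
  rw [key]
  exact IsSumSq.smul_of_nonneg (by positivity) (isSumSq_sum_X_pow_add_sub_monomial hα hε)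

variable [DecidableEq σ]

theorem coeff_amgmTerm (d : ℕ) (c : ℝ) (α β : σ →₀ ℕ) :
    coeff β (amgmTerm d c α) = (if α = β then c else 0)
      + (if 0 = β then |c| * ((2 * d - ∑ i, α i : ℕ) : ℝ) / ((2 * d : ℕ) : ℝ) else 0)
      + ∑ i, if Finsupp.single i (2 * d) = β then |c| * ((α i : ℕ) : ℝ) / ((2 * d : ℕ) : ℝ)
          else 0 := by
  simp only [amgmTerm, coeff_add, coeff_sum, coeff_monomial]

theorem coeff_zero_sum_amgmTerm {d : ℕ} (hd : 0 < d) (c : (σ →₀ ℕ) → ℝ) {Δ : Finset (σ →₀ ℕ)}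
    (hΔ : ∀ α ∈ Δ, α ≠ 0) :
    coeff 0 (∑ α ∈ Δ, amgmTerm d (c α) α)
      = ∑ α ∈ Δ, |c α| * ((2 * d - ∑ i, α i : ℕ) : ℝ) / ((2 * d : ℕ) : ℝ) := by
  have hN : ∀ i : σ, Finsupp.single i (2 * d) ≠ 0 := fun i => Finsupp.single_ne_zero.mpr (by omega)
  rw [coeff_sum]
  refine Finset.sum_congr rfl fun α hα => ?_
  simp only [coeff_amgmTerm, if_neg (hΔ α hα), if_true, if_neg (hN _), Finset.sum_const_zero,
    zero_add, add_zero]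

theorem coeff_single_sum_amgmTerm {d : ℕ} (hd : 0 < d) (c : (σ →₀ ℕ) → ℝ)
    {Δ : Finset (σ →₀ ℕ)} (i : σ) (hΔ : ∀ α ∈ Δ, α ≠ Finsupp.single i (2 * d)) :
    coeff (Finsupp.single i (2 * d)) (∑ α ∈ Δ, amgmTerm d (c α) α)
      = ∑ α ∈ Δ, |c α| * ((α i : ℕ) : ℝ) / ((2 * d : ℕ) : ℝ) := by
  have hN : 2 * d ≠ 0 := by omega
  rw [coeff_sum]
  refine Finset.sum_congr rfl fun α hα => ?_
  simp only [coeff_amgmTerm, if_neg (hΔ α hα), if_neg (Finsupp.single_ne_zero.mpr hN).symm,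
    Finsupp.single_left_inj hN, Finset.sum_ite_eq', Finset.mem_univ, if_true, zero_add]

theorem coeff_sum_amgmTerm_of_ne {d : ℕ} (c : (σ →₀ ℕ) → ℝ) (Δ : Finset (σ →₀ ℕ))
    {β : σ →₀ ℕ} (h0 : β ≠ 0) (hβ : ∀ i, β ≠ Finsupp.single i (2 * d)) :
    coeff β (∑ α ∈ Δ, amgmTerm d (c α) α) = if β ∈ Δ then c β else 0 := by
  simp only [coeff_sum, coeff_amgmTerm, if_neg h0.symm, fun i => (hβ i).symm, if_false,
    Finset.sum_const_zero, add_zero, Finset.sum_ite_eq']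

theorem isSumSq_sub_sum_amgmTerm {d : ℕ} (hd : 0 < d) (f : MvPolynomial σ ℝ)
    (Δ : Finset (σ →₀ ℕ))
    (hΔ : ∀ α, α ∈ Δ ↔ α ∈ f.support ∧ α ≠ 0 ∧
      (¬ ∃ i, α = Finsupp.single i (2 * d)) ∧
      (f.coeff α < 0 ∨ ∃ i, Odd (α i)))
    (hL1 : ∑ α ∈ Δ, |f.coeff α| * ((2 * d - ∑ i, α i : ℕ) : ℝ) / ((2 * d : ℕ) : ℝ)
      ≤ f.coeff 0)
    (hL2 : ∀ i, ∑ α ∈ Δ, |f.coeff α| * ((α i : ℕ) : ℝ) / ((2 * d : ℕ) : ℝ)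
      ≤ f.coeff (Finsupp.single i (2 * d))) :
    IsSumSq (f - ∑ α ∈ Δ, amgmTerm d (f.coeff α) α) := by
  have isSquare_of_nonneg {x : ℝ} (hx : 0 ≤ x) : IsSquare x := ⟨√x, (Real.mul_self_sqrt hx).symm⟩
  refine isSumSq_of_forall_mem_support fun β hβ => ?_
  rw [mem_support_iff, coeff_sub] at hβ
  rw [coeff_sub]
  by_cases h0 : β = 0
  · subst h0
    rw [coeff_zero_sum_amgmTerm hd _ fun α hα => ((hΔ α).1 hα).2.1]
    exact ⟨Even.zero, isSquare_of_nonneg (sub_nonneg.mpr hL1)⟩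
  by_cases hsingle : ∃ i, β = Finsupp.single i (2 * d)
  · obtain ⟨i, rfl⟩ := hsingle
    rw [coeff_single_sum_amgmTerm hd _ i fun α hα h => ((hΔ α).1 hα).2.2.1 ⟨i, h⟩]
    refine ⟨⟨Finsupp.single i d, by rw [← Finsupp.single_add, two_mul]⟩,
      isSquare_of_nonneg (sub_nonneg.mpr (hL2 i))⟩
  push Not at hsingle
  rw [coeff_sum_amgmTerm_of_ne _ _ h0 hsingle] at hβ ⊢
  have hβΔ : β ∉ Δ := fun h => hβ (by rw [if_pos h, sub_self])
  rw [if_neg hβΔ, sub_zero] at hβ ⊢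
  have hgood := mt (hΔ β).2 hβΔ
  simp only [mem_support_iff, not_and, not_or, not_lt, not_exists, Nat.not_odd_iff_even] at hgood
  obtain ⟨hpos, heven⟩ := hgood hβ h0 hsingle
  exact ⟨Finsupp.even_of_forall_even heven, isSquare_of_nonneg hpos⟩

end MvPolynomial

/-- Lasserre's SOS criterion: let `f` have degree `2d`, constant term `f_0`,
coefficient `f_{2d,i}` of `X_i^{2d}`, and let `Δ` be the set of exponents
`α ∉ {0, 2d·e_1,…,2d·e_n}` with `f_α ≠ 0` and `f_α X^α` not a square.  If
`f_0 ≥ Σ_{α∈Δ} |f_α|(2d−|α|)/(2d)` and `f_{2d,i} ≥ Σ_{α∈Δ} |f_α| α_i/(2d)`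
for each `i`, then `f` is a sum of squares. -/
theorem lasserre_sos {n d : ℕ} (hd : 1 ≤ d) (f : MvPolynomial (Fin n) ℝ)
    (hdeg : f.totalDegree = 2 * d) (Δ : Finset (Fin n →₀ ℕ))
    (hΔ : ∀ α, α ∈ Δ ↔ α ∈ f.support ∧ α ≠ 0 ∧
      (¬ ∃ i, α = Finsupp.single i (2 * d)) ∧
      (f.coeff α < 0 ∨ ∃ i, Odd (α i)))
    (hL1 : ∑ α ∈ Δ, |f.coeff α| * ((2 * d - ∑ i, α i : ℕ) : ℝ) / ((2 * d : ℕ) : ℝ)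
      ≤ f.coeff 0)
    (hL2 : ∀ i, ∑ α ∈ Δ, |f.coeff α| * ((α i : ℕ) : ℝ) / ((2 * d : ℕ) : ℝ)
      ≤ f.coeff (Finsupp.single i (2 * d))) :
    IsSumSq f := by
  have hterms : ∀ α ∈ Δ, IsSumSq (amgmTerm d (f.coeff α) α) := fun α hα =>
    isSumSq_amgmTerm hd _ <| by
      rw [← hdeg, ← Finsupp.sum_fintype α (fun _ e => e) fun _ => rfl]
      exact le_totalDegree ((hΔ α).1 hα).1
  simpa using (isSumSq_sub_sum_amgmTerm hd f Δ hΔ hL1 hL2).add (IsSumSq.sum hterms)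
end

section
/- Suppose min_{i} f_{2d,i} ≥ (1/2d)·Σ_{α∈Δ}|f_α|·(α^α)^{1/2d} with all f_{2d,i} > 0. Then Σ_{α∈Δ} |f_α|·(α^α)^{1/2d}/(2d·Π_{i=1}^n f_{2d,i}^{α_i/2d}) ≤ 1. In other words, the hypothesis of the Fidalgo–Kovacec criterion implies the hypothesis of its improved version. -/
/-! A weighted geometric mean `∏ c_i ^ (α_i / 2d)` with weights summing to one is at least
every common lower bound of the `c_i`, and the Fidalgo–Kovacec hypothesis says that `S / 2d` is
such a bound, where `S` is the sum of the numerators. So every denominator `2d · ∏ c_i ^ (α_i / 2d)` is at least `S`, and the sum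
of the fractions is at most `S / S ≤ 1`. -/

theorem Real.le_prod_rpow_of_le {ι : Type*} (s : Finset ι) {c w : ι → ℝ} {m : ℝ} (hm : 0 ≤ m)
    (hmc : ∀ i ∈ s, m ≤ c i) (hw : ∀ i ∈ s, 0 ≤ w i) (hw1 : ∑ i ∈ s, w i = 1) :
    m ≤ ∏ i ∈ s, c i ^ w i :=
  calc m = m ^ ∑ i ∈ s, w i := by rw [hw1, Real.rpow_one]
    _ = ∏ i ∈ s, m ^ w i := Real.rpow_sum_of_nonneg hm hw
    _ ≤ ∏ i ∈ s, c i ^ w i :=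
      Finset.prod_le_prod (fun i _ => Real.rpow_nonneg hm _)
        fun i hi => Real.rpow_le_rpow hm (hmc i hi) (hw i hi)

theorem Finset.sum_div_le_one_of_sum_le {ι : Type*} (s : Finset ι) {t b : ι → ℝ}
    (ht : ∀ a ∈ s, 0 ≤ t a) (hb : ∀ a ∈ s, ∑ x ∈ s, t x ≤ b a) :
    ∑ a ∈ s, t a / b a ≤ 1 := by
  rcases (Finset.sum_nonneg ht).eq_or_lt with hS | hS
  · have hzero := (Finset.sum_eq_zero_iff_of_nonneg ht).1 hS.symm
    rw [Finset.sum_eq_zero fun a ha => by rw [hzero a ha, zero_div]]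
    exact zero_le_one
  · calc ∑ a ∈ s, t a / b a ≤ ∑ a ∈ s, t a / ∑ x ∈ s, t x :=
          Finset.sum_le_sum fun a ha => div_le_div_of_nonneg_left (ht a ha) hS (hb a ha)
      _ = 1 := by rw [← Finset.sum_div, div_self hS.ne']

theorem fk_implies_improved_general {n d : ℕ} (hd : 1 ≤ d)
    (Δ : Finset (Fin n →₀ ℕ)) (hΔdeg : ∀ α ∈ Δ, ∑ i, α i = 2 * d)
    (fc : (Fin n →₀ ℕ) → ℝ) (c : Fin n → ℝ)
    (hmin : ∀ i, (1 / ((2 * d : ℕ) : ℝ)) *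
        ∑ α ∈ Δ, |fc α| * (∏ j, ((α j : ℕ) : ℝ) ^ (α j)) ^ (1 / ((2 * d : ℕ) : ℝ))
      ≤ c i) :
    ∑ α ∈ Δ,
        |fc α| * (∏ j, ((α j : ℕ) : ℝ) ^ (α j)) ^ (1 / ((2 * d : ℕ) : ℝ)) /
          (((2 * d : ℕ) : ℝ) * ∏ i, (c i) ^ (((α i : ℕ) : ℝ) / ((2 * d : ℕ) : ℝ)))
      ≤ 1 := by
  set D : ℝ := ((2 * d : ℕ) : ℝ)
  have hDpos : 0 < D := by positivity
  apply Finset.sum_div_le_one_of_sum_le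
  · intro α _
    positivity
  · intro α hα
    rw [← div_le_iff₀' hDpos]
    refine Real.le_prod_rpow_of_le _ (by positivity) (fun i _ => ?_)
      (fun i _ => by positivity) ?_
    · simpa only [one_div, inv_mul_eq_div] using hmin i
    · rw [← Finset.sum_div, ← Nat.cast_sum, hΔdeg α hα, div_self hDpos.ne']

/-- The hypothesis of the Fidalgo–Kovacec criterion implies the hypothesis of
its improved version: if `c i > 0` for all `i` and
`min_i c i ≥ (1/2d)·Σ_{α∈Δ}|f_α|·(α^α)^{1/2d}`, then
`Σ_{α∈Δ} |f_α|·(α^α)^{1/2d}/(2d·Π_i c_i^{α_i/2d}) ≤ 1`. -/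
theorem fk_implies_improved {n d : ℕ} (hd : 1 ≤ d) (hn : 0 < n)
    (Δ : Finset (Fin n →₀ ℕ)) (hΔdeg : ∀ α ∈ Δ, ∑ i, α i = 2 * d)
    (fc : (Fin n →₀ ℕ) → ℝ) (c : Fin n → ℝ) (hc : ∀ i, 0 < c i)
    (hmin : ∀ i, (1 / ((2 * d : ℕ) : ℝ)) *
        ∑ α ∈ Δ, |fc α| * (∏ j, ((α j : ℕ) : ℝ) ^ (α j)) ^ (1 / ((2 * d : ℕ) : ℝ))
      ≤ c i) :
    ∑ α ∈ Δ,
        |fc α| * (∏ j, ((α j : ℕ) : ℝ) ^ (α j)) ^ (1 / ((2 * d : ℕ) : ℝ)) /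
          (((2 * d : ℕ) : ℝ) * ∏ i, (c i) ^ (((α i : ℕ) : ℝ) / ((2 * d : ℕ) : ℝ)))
      ≤ 1 :=
  fk_implies_improved_general hd Δ hΔdeg fc c hmin
end

section
/- Let f = Σ_i f_{2d,i}X_i^{2d} + f_0 + f_α X^α where α ∈ ℕ^n with 0 < |α| < 2d, f_α X^α not a square (f_α < 0 or some α_i odd), and suppose f − r ≥ 0 on ℝ^n for some real r. Then f_{2d,i} ≥ 0 for all i, f_0 ≥ r, and f_α^{2d}·α^α·(2d−|α|)^{2d−|α|} ≤ (2d)^{2d}·Π_i f_{2d,i}^{α_i}·(f_0−r)^{2d−|α|}. -/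
/-!
Evaluating at the origin and far out on a coordinate axis gives `f₀ ≥ r` and `cᵢ ≥ 0`.
Since `f_α < 0` or some `αᵢ` is odd, flipping the sign of a coordinate turns the hypothesis into
`|f_α| t^α ≤ Σ cᵢ tᵢ^{2d} + (f₀ - r)` for all `t ≥ 0`. In the variables `sᵢ = tᵢ^{2d}` this is
tested at the equality point `sᵢ = αᵢ (f₀ - r) / (cᵢ (2d - |α|))` of weighted AM-GM, which gives
the bound when all `cᵢ` and `f₀ - r` are positive; the general case follows by perturbing them.
-/

open Finset

variable {ι : Type*} [Fintype ι]

theorem nonneg_of_forall_nonneg_add_mul_prod_pow {α : ι → ℕ} {k : ℕ} {c : ι → ℝ} {F g : ℝ}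
    (hα : 0 < ∑ i, α i) (hk : k ≠ 0)
    (h : ∀ x : ι → ℝ, 0 ≤ ∑ i, c i * x i ^ k + g + F * ∏ i, x i ^ α i) : 0 ≤ g := by
  obtain ⟨i, -, hi⟩ := exists_ne_zero_of_sum_ne_zero hα.ne'
  have h0 : ∏ j, (0 : ℝ) ^ α j = 0 := prod_eq_zero (mem_univ i) (zero_pow hi)
  simpa [zero_pow hk, h0] using h 0

theorem coeff_nonneg_of_forall_nonneg_add_mul_prod_pow {α : ι → ℕ} {k : ℕ} {c : ι → ℝ}
    {F g : ℝ} (hαk : ∑ i, α i < k)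
    (h : ∀ x : ι → ℝ, 0 ≤ ∑ i, c i * x i ^ k + g + F * ∏ i, x i ^ α i) (i : ι) : 0 ≤ c i := by
  classical
  by_contra! hci
  set B := |F| + |g|
  set s := max 1 ((B + 1) / -c i)
  have hs1 : 1 ≤ s := le_max_left _ _
  have hsB : B + 1 ≤ s * -c i := (div_le_iff₀ (neg_pos.2 hci)).1 (le_max_right _ _)
  set x : ι → ℝ := Pi.single i s
  have hsum : ∑ j, c j * x j ^ k = c i * s ^ k := by
    rw [Fintype.sum_eq_single i fun j hj => by simp [x, hj, zero_pow (by omega : k ≠ 0)]]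
    simp [x]
  have hprod : |∏ j, x j ^ α j| ≤ s ^ (k - 1) := calc
    |∏ j, x j ^ α j| = ∏ j, |x j| ^ α j := by simp only [abs_prod, abs_pow]
    _ ≤ ∏ j, s ^ α j := by
      gcongr with j
      rcases eq_or_ne j i with rfl | hj
      · simp [x, abs_of_pos (by linarith : (0 : ℝ) < s)]
      · simp [x, hj]; linarith
    _ ≤ s ^ (k - 1) := by rw [prod_pow_eq_pow_sum]; exact pow_le_pow_right₀ hs1 (by omega)
  have hs1k : 1 ≤ s ^ (k - 1) := one_le_pow₀ hs1
  have hF : F * ∏ j, x j ^ α j ≤ |F| * s ^ (k - 1) := calc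
    F * ∏ j, x j ^ α j ≤ |F| * |∏ j, x j ^ α j| := by rw [← abs_mul]; exact le_abs_self _
    _ ≤ |F| * s ^ (k - 1) := by gcongr
  have hg : g ≤ |g| * s ^ (k - 1) :=
    (le_abs_self g).trans (le_mul_of_one_le_right (abs_nonneg g) hs1k)
  have hpow : s ^ k = s * s ^ (k - 1) := by rw [← pow_succ']; congr 1; omega
  have : 0 ≤ (c i * s + B) * s ^ (k - 1) := by
    have := h x
    rw [hsum, hpow] at this
    linarith
  exact (mul_neg_of_neg_of_pos (by linarith) (by linarith)).not_ge this

theorem abs_mul_prod_pow_le_of_forall_nonneg_add_mul_prod_pow [DecidableEq ι] {α : ι → ℕ}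
    {k : ℕ} {c : ι → ℝ} {F g : ℝ} (hk : Even k) (hns : F < 0 ∨ ∃ i, Odd (α i))
    (h : ∀ x : ι → ℝ, 0 ≤ ∑ i, c i * x i ^ k + g + F * ∏ i, x i ^ α i) (t : ι → ℝ) :
    |F| * ∏ i, t i ^ α i ≤ ∑ i, c i * t i ^ k + g := by
  rcases le_or_gt F 0 with hF | hF
  · rw [abs_of_nonpos hF]
    linarith [h t]
  obtain ⟨i, hi⟩ := hns.resolve_left hF.not_gt
  set x := Function.update t i (-t i)
  have hsum : ∑ j, c j * x j ^ k = ∑ j, c j * t j ^ k := by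
    refine sum_congr rfl fun j _ => ?_
    rcases eq_or_ne j i with rfl | hj
    · simp [x, hk.neg_pow]
    · simp [x, hj]
  have hprod : ∏ j, x j ^ α j = -∏ j, t j ^ α j := by
    have hrest : ∏ j ∈ univ.erase i, x j ^ α j = ∏ j ∈ univ.erase i, t j ^ α j :=
      prod_congr rfl fun j hj => by simp [x, ne_of_mem_erase hj]
    rw [← mul_prod_erase _ _ (mem_univ i), hrest,
      ← mul_prod_erase _ (fun j => t j ^ α j) (mem_univ i)]
    simp [x, hi.neg_pow]
  have := h x
  rw [hsum, hprod] at this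
  rw [abs_of_pos hF]
  linarith

theorem pow_mul_prod_pow_le_pow_of_forall_le {α : ι → ℕ} {k : ℕ} {c : ι → ℝ} {F g : ℝ}
    (hF : 0 ≤ F) (hk : k ≠ 0)
    (h : ∀ t : ι → ℝ, (∀ i, 0 ≤ t i) → F * ∏ i, t i ^ α i ≤ ∑ i, c i * t i ^ k + g)
    (s : ι → ℝ) (hs : ∀ i, 0 ≤ s i) :
    F ^ k * ∏ i, s i ^ α i ≤ (∑ i, c i * s i + g) ^ k := by
  set t : ι → ℝ := fun i => s i ^ (k⁻¹ : ℝ)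
  have ht : ∀ i, 0 ≤ t i := fun i => Real.rpow_nonneg (hs i) _
  have htk : ∀ i, t i ^ k = s i := fun i => Real.rpow_inv_natCast_pow (hs i) hk
  calc F ^ k * ∏ i, s i ^ α i = (F * ∏ i, t i ^ α i) ^ k := by
        rw [mul_pow, ← prod_pow]
        exact congrArg _ (prod_congr rfl fun i _ => by rw [pow_right_comm, htk])
    _ ≤ (∑ i, c i * s i + g) ^ k := by
        gcongr
        · exact mul_nonneg hF (prod_nonneg fun i _ => pow_nonneg (ht i) _)
        · simpa only [htk] using h t ht

theorem pow_mul_prod_pow_le_of_forall_pow_mul_prod_pow_le {α : ι → ℕ} {k : ℕ} {c : ι → ℝ}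
    {F g : ℝ} (hαk : ∑ i, α i < k) (hc : ∀ i, 0 < c i) (hg : 0 < g)
    (h : ∀ s : ι → ℝ, (∀ i, 0 ≤ s i) → F ^ k * ∏ i, s i ^ α i ≤ (∑ i, c i * s i + g) ^ k) :
    F ^ k * (∏ i, (α i : ℝ) ^ α i) * ((k - ∑ i, α i : ℕ) : ℝ) ^ (k - ∑ i, α i)
      ≤ (k : ℝ) ^ k * (∏ i, c i ^ α i) * g ^ (k - ∑ i, α i) := by
  set a := ∑ i, α i
  set m := k - a
  have hm : (0 : ℝ) < m := by simp only [m]; exact_mod_cast Nat.sub_pos_of_lt hαk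
  have hkam : (k : ℝ) = a + m := by simp only [m]; push_cast [hαk.le]; ring
  set u := g / m
  have hu : 0 < u := div_pos hg hm
  have hgu : g = u * m := (div_mul_cancel₀ g hm.ne').symm
  have hC : 0 < ∏ i, c i ^ α i := prod_pos fun i _ => pow_pos (hc i) _
  -- the equality case of weighted AM-GM
  have key := h (fun i => α i * u / c i) fun i => by have := hc i; positivity
  have hsum : ∑ i, c i * (α i * u / c i) + g = k * u := by
    simp only [fun i => mul_div_cancel₀ ((α i : ℝ) * u) (hc i).ne', ← sum_mul]
    push_cast [hkam, hgu, a]; ring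
  have hprod : ∏ i, (α i * u / c i) ^ α i = (∏ i, (α i : ℝ) ^ α i) * u ^ a / ∏ i, c i ^ α i := by
    simp only [div_pow, mul_pow, prod_div_distrib, prod_mul_distrib, prod_pow_eq_pow_sum, a]
  rw [hsum, hprod, mul_pow] at key
  have hpow : u ^ k = u ^ a * u ^ m := by rw [← pow_add]; congr 1; omega
  have hcancel : F ^ k * (∏ i, (α i : ℝ) ^ α i) ≤ (k : ℝ) ^ k * (∏ i, c i ^ α i) * u ^ m := by
    rw [mul_div_assoc', div_le_iff₀ hC, hpow] at key
    refine le_of_mul_le_mul_right ?_ (pow_pos hu a)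
    linarith
  calc F ^ k * (∏ i, (α i : ℝ) ^ α i) * (m : ℝ) ^ m
      ≤ (k : ℝ) ^ k * (∏ i, c i ^ α i) * u ^ m * (m : ℝ) ^ m := by gcongr
    _ = (k : ℝ) ^ k * (∏ i, c i ^ α i) * g ^ m := by rw [hgu, mul_pow]; ring

theorem pow_mul_prod_pow_le_of_forall_mul_prod_pow_le {α : ι → ℕ} {k : ℕ} {c : ι → ℝ}
    {F g : ℝ} (hαk : ∑ i, α i < k) (hc : ∀ i, 0 ≤ c i) (hg : 0 ≤ g) (hF : 0 ≤ F)
    (h : ∀ t : ι → ℝ, (∀ i, 0 ≤ t i) → F * ∏ i, t i ^ α i ≤ ∑ i, c i * t i ^ k + g) :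
    F ^ k * (∏ i, (α i : ℝ) ^ α i) * ((k - ∑ i, α i : ℕ) : ℝ) ^ (k - ∑ i, α i)
      ≤ (k : ℝ) ^ k * (∏ i, c i ^ α i) * g ^ (k - ∑ i, α i) := by
  have hperturbed : ∀ ε : ℝ, 0 < ε → F ^ k * (∏ i, (α i : ℝ) ^ α i) *
      ((k - ∑ i, α i : ℕ) : ℝ) ^ (k - ∑ i, α i)
        ≤ (k : ℝ) ^ k * (∏ i, (c i + ε) ^ α i) * (g + ε) ^ (k - ∑ i, α i) := by
    intro ε hε
    refine pow_mul_prod_pow_le_of_forall_pow_mul_prod_pow_le hαk (fun i => by linarith [hc i])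
      (by linarith) (pow_mul_prod_pow_le_pow_of_forall_le hF (by omega) fun t ht => ?_)
    calc F * ∏ i, t i ^ α i ≤ ∑ i, c i * t i ^ k + g := h t ht
      _ ≤ ∑ i, (c i + ε) * t i ^ k + (g + ε) := by
        gcongr with i
        · exact pow_nonneg (ht i) k
        · linarith
        · linarith
  have hcont : ContinuousAt (fun ε : ℝ =>
      (k : ℝ) ^ k * (∏ i, (c i + ε) ^ α i) * (g + ε) ^ (k - ∑ i, α i)) 0 := by fun_prop
  simpa using ge_of_tendsto (hcont.tendsto.mono_left nhdsWithin_le_nhds)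
    (eventually_nhdsWithin_of_forall (s := Set.Ioi 0) hperturbed)

theorem single_term_psd_ineq_general {n d : ℕ} (α : Fin n → ℕ)
    (hα0 : 0 < ∑ i, α i) (hα2d : ∑ i, α i < 2 * d)
    (c : Fin n → ℝ) (f0 fα : ℝ)
    (hns : fα < 0 ∨ ∃ i, Odd (α i)) (r : ℝ)
    (hpsd : ∀ x : Fin n → ℝ,
      0 ≤ (∑ i, c i * x i ^ (2 * d) + f0 + fα * ∏ i, x i ^ α i) - r) :
    (∀ i, 0 ≤ c i) ∧ r ≤ f0 ∧
      fα ^ (2 * d) * (∏ i, (α i : ℝ) ^ (α i)) *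
          ((2 * d - ∑ i, α i : ℕ) : ℝ) ^ (2 * d - ∑ i, α i)
        ≤ ((2 * d : ℕ) : ℝ) ^ (2 * d) * (∏ i, (c i) ^ (α i)) *
          (f0 - r) ^ (2 * d - ∑ i, α i) := by
  have h : ∀ x : Fin n → ℝ, 0 ≤ ∑ i, c i * x i ^ (2 * d) + (f0 - r) + fα * ∏ i, x i ^ α i :=
    fun x => by linarith [hpsd x]
  have hg := nonneg_of_forall_nonneg_add_mul_prod_pow hα0 (by omega) h
  have hc := coeff_nonneg_of_forall_nonneg_add_mul_prod_pow hα2d h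
  refine ⟨hc, sub_nonneg.1 hg, ?_⟩
  rw [← (even_two_mul d).pow_abs fα]
  exact pow_mul_prod_pow_le_of_forall_mul_prod_pow_le hα2d hc hg (abs_nonneg fα)
    fun t _ => abs_mul_prod_pow_le_of_forall_nonneg_add_mul_prod_pow (even_two_mul d) hns h t

/-- Single non-diagonal term case: let
`f(x) = Σ_i c_i x_i^{2d} + f_0 + f_α x^α` with `0 < |α| < 2d` and `f_α x^α` not a
square.  If `f − r ≥ 0` on `ℝ^n`, then `c_i ≥ 0` for all `i`, `f_0 ≥ r`, and
`f_α^{2d}·α^α·(2d−|α|)^{2d−|α|} ≤ (2d)^{2d}·Π_i c_i^{α_i}·(f_0−r)^{2d−|α|}`. -/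
theorem single_term_psd_ineq {n d : ℕ} (hd : 1 ≤ d) (α : Fin n → ℕ)
    (hα0 : 0 < ∑ i, α i) (hα2d : ∑ i, α i < 2 * d)
    (c : Fin n → ℝ) (f0 fα : ℝ)
    (hns : fα < 0 ∨ ∃ i, Odd (α i)) (r : ℝ)
    (hpsd : ∀ x : Fin n → ℝ,
      0 ≤ (∑ i, c i * x i ^ (2 * d) + f0 + fα * ∏ i, x i ^ α i) - r) :
    (∀ i, 0 ≤ c i) ∧ r ≤ f0 ∧
      fα ^ (2 * d) * (∏ i, (α i : ℝ) ^ (α i)) *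
          ((2 * d - ∑ i, α i : ℕ) : ℝ) ^ (2 * d - ∑ i, α i)
        ≤ ((2 * d : ℕ) : ℝ) ^ (2 * d) * (∏ i, (c i) ^ (α i)) *
          (f0 - r) ^ (2 * d - ∑ i, α i) :=
  single_term_psd_ineq_general α hα0 hα2d c f0 fα hns r hpsd
end

section
/- For every real number t ≥ 0 and every integer d ≥ 1, the two-variable form α_1 X^{2d} + α_2 Y^{2d} − 2d·X^{α_1}Y^{α_2}, with α_1 + α_2 = 2d and α_1, α_2 ∈ ℕ, is a sum of squares of binomials (polynomials of the form aX^βY^γ − bX^{β'}Y^{γ'}). -/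
open MvPolynomial

/-- The set of squares of binomials in `ℝ[X,Y]`. -/
def binomSq2 : Set (MvPolynomial (Fin 2) ℝ) :=
  {q | ∃ (a b : ℝ) (β γ : Fin 2 →₀ ℕ),
    q = (monomial β a - monomial γ b) ^ 2}

/-- `p` is a sum of binomial squares. -/
def IsSOBS2 (p : MvPolynomial (Fin 2) ℝ) : Prop :=
  p ∈ AddSubmonoid.closure binomSq2

/-!
Write `F(α₁, α₂; x, y) = α₁ x^{α₁+α₂} + α₂ y^{α₁+α₂} - (α₁+α₂) x^{α₁} y^{α₂}`.
With `s = x²`, `t = y²`, one has `F(a+1, b; s, t) = s F(a, b; s, t) + Δ(a, b)`, where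
`Δ(a, b+1) = t Δ(a, b) + (s - t)(s^{a+b+1} - t^{a+b+1})` and
`(s - t)(s^{k+1} - t^{k+1}) = s (s - t)(s^k - t^k) + t^k (s - t)²`.
So `F(a, b; s, t)` lies in every additive cone stable under multiplication by `s` and `t` that
contains `(s - t)²`. Finally `F(2a, 2b; x, y) = 2 F(a, b; s, t)`, and the odd exponent
`(2a+1, 2b+1)` is the midpoint of `(2a+2, 2b)` and `(2a, 2b+2)`, which costs the extra binomial
square `(a+b+1) (x^{a+1} y^b - x^a y^{b+1})²`.
-/

section Cone

variable {R : Type*} [CommRing R]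

def amgmForm (α₁ α₂ : ℕ) (x y : R) : R :=
  α₁ * x ^ (α₁ + α₂) + α₂ * y ^ (α₁ + α₂) - (α₁ + α₂ : ℕ) * (x ^ α₁ * y ^ α₂)

theorem amgmForm_two_mul (a b : ℕ) (x y : R) :
    amgmForm (2 * a) (2 * b) x y = 2 * amgmForm a b (x ^ 2) (y ^ 2) := by
  simp only [amgmForm]
  push_cast
  ring

theorem amgmForm_two_mul_add_one (a b : ℕ) (x y : R) :
    amgmForm (2 * a + 1) (2 * b + 1) x y =
      (a + b + 1) • ((x ^ 2) ^ a * ((y ^ 2) ^ b * (x - y) ^ 2)) +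
        amgmForm (a + 1) b (x ^ 2) (y ^ 2) + amgmForm a (b + 1) (x ^ 2) (y ^ 2) := by
  simp only [amgmForm, nsmul_eq_mul]
  push_cast
  ring

variable {S : AddSubmonoid R} {s t : R}

theorem pow_mul_mem_of_mul_mem {r : R} (hr : ∀ p ∈ S, r * p ∈ S) (n : ℕ) {p : R}
    (hp : p ∈ S) : r ^ n * p ∈ S := by
  induction n with
  | zero => simpa using hp
  | succ n ih => simpa only [pow_succ', mul_assoc] using hr _ ih

theorem sub_mul_pow_sub_pow_mem (hs : ∀ p ∈ S, s * p ∈ S) (ht : ∀ p ∈ S, t * p ∈ S)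
    (hst : (s - t) ^ 2 ∈ S) (k : ℕ) : (s - t) * (s ^ k - t ^ k) ∈ S := by
  induction k with
  | zero => simp
  | succ k ih =>
    have h : (s - t) * (s ^ (k + 1) - t ^ (k + 1)) =
        s * ((s - t) * (s ^ k - t ^ k)) + t ^ k * (s - t) ^ 2 := by ring
    rw [h]
    exact add_mem (hs _ ih) (pow_mul_mem_of_mul_mem ht k hst)

theorem amgmForm_succ_sub_mul_mem (hs : ∀ p ∈ S, s * p ∈ S) (ht : ∀ p ∈ S, t * p ∈ S)
    (hst : (s - t) ^ 2 ∈ S) (a b : ℕ) :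
    amgmForm (a + 1) b s t - s * amgmForm a b s t ∈ S := by
  induction b with
  | zero =>
    have h : amgmForm (a + 1) 0 s t - s * amgmForm a 0 s t = 0 := by
      simp only [amgmForm]
      push_cast
      ring
    rw [h]
    exact zero_mem S
  | succ b ih =>
    have h : amgmForm (a + 1) (b + 1) s t - s * amgmForm a (b + 1) s t =
        t * (amgmForm (a + 1) b s t - s * amgmForm a b s t) +
          (s - t) * (s ^ (a + b + 1) - t ^ (a + b + 1)) := by
      simp only [amgmForm]
      push_cast
      ring
    rw [h]
    exact add_mem (ht _ ih) (sub_mul_pow_sub_pow_mem hs ht hst _)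

theorem amgmForm_mem_of_mul_mem (hs : ∀ p ∈ S, s * p ∈ S) (ht : ∀ p ∈ S, t * p ∈ S)
    (hst : (s - t) ^ 2 ∈ S) (a b : ℕ) : amgmForm a b s t ∈ S := by
  induction a with
  | zero =>
    have h : amgmForm 0 b s t = 0 := by
      simp only [amgmForm]
      push_cast
      ring
    rw [h]
    exact zero_mem S
  | succ a ih =>
    rw [← add_sub_cancel (s * amgmForm a b s t) (amgmForm (a + 1) b s t)]
    exact add_mem (hs _ ih) (amgmForm_succ_sub_mul_mem hs ht hst a b)

theorem amgmForm_mem {x y : R} (hx : ∀ p ∈ S, x ^ 2 * p ∈ S) (hy : ∀ p ∈ S, y ^ 2 * p ∈ S)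
    (hxy : (x - y) ^ 2 ∈ S) (hxy₂ : (x ^ 2 - y ^ 2) ^ 2 ∈ S) {α₁ α₂ : ℕ}
    (heven : Even (α₁ + α₂)) : amgmForm α₁ α₂ x y ∈ S := by
  obtain ⟨d, hd⟩ := heven
  obtain ⟨a, rfl | rfl⟩ := Nat.even_or_odd' α₁
  · obtain ⟨b, rfl⟩ : ∃ b, α₂ = 2 * b := ⟨d - a, by omega⟩
    have h := amgmForm_mem_of_mul_mem hx hy hxy₂ a b
    rw [amgmForm_two_mul, two_mul]
    exact add_mem h h
  · obtain ⟨b, rfl⟩ : ∃ b, α₂ = 2 * b + 1 := ⟨d - a - 1, by omega⟩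
    rw [amgmForm_two_mul_add_one]
    refine add_mem (add_mem (nsmul_mem ?_ _) ?_) ?_
    · exact pow_mul_mem_of_mul_mem hx a (pow_mul_mem_of_mul_mem hy b hxy)
    all_goals exact amgmForm_mem_of_mul_mem hx hy hxy₂ _ _

end Cone

namespace IsSOBS2

theorem sq_monomial_sub_monomial (a b : ℝ) (β γ : Fin 2 →₀ ℕ) :
    IsSOBS2 ((monomial β a - monomial γ b) ^ 2) :=
  AddSubmonoid.subset_closure ⟨a, b, β, γ, rfl⟩

theorem monomial_sq_mul (δ : Fin 2 →₀ ℕ) (c : ℝ) {p : MvPolynomial (Fin 2) ℝ}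
    (hp : IsSOBS2 p) : IsSOBS2 (monomial δ c ^ 2 * p) := by
  induction hp using AddSubmonoid.closure_induction with
  | mem q hq =>
    obtain ⟨a, b, β, γ, rfl⟩ := hq
    rw [← mul_pow, mul_sub, monomial_mul, monomial_mul]
    exact sq_monomial_sub_monomial _ _ _ _
  | zero => rw [mul_zero]; exact zero_mem _
  | add p q _ _ hp hq => rw [mul_add]; exact add_mem hp hq

end IsSOBS2

theorem hurwitz_reznick_two_vars_general {d : ℕ} (α₁ α₂ : ℕ) (hα : α₁ + α₂ = 2 * d) :
    IsSOBS2 (C ((α₁ : ℕ) : ℝ) * X 0 ^ (2 * d) + C ((α₂ : ℕ) : ℝ) * X 1 ^ (2 * d)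
      - C ((2 * d : ℕ) : ℝ) * (X 0 ^ α₁ * X 1 ^ α₂)) := by
  have hsq : IsSOBS2 ((X 0 ^ 2 - X 1 ^ 2) ^ 2) := by
    rw [X_pow_eq_monomial, X_pow_eq_monomial]
    exact IsSOBS2.sq_monomial_sub_monomial 1 1 _ _
  have h := amgmForm_mem (x := X 0) (y := X 1)
    (fun _ hp => IsSOBS2.monomial_sq_mul _ 1 hp) (fun _ hp => IsSOBS2.monomial_sq_mul _ 1 hp)
    (IsSOBS2.sq_monomial_sub_monomial 1 1 _ _) hsq (⟨d, by omega⟩ : Even (α₁ + α₂))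
  rw [amgmForm, hα] at h
  simp only [map_natCast]
  exact h

/-- Two-variable base case of the Hurwitz–Reznick theorem: for `d ≥ 1` and
`α₁ + α₂ = 2d`, the form `α₁X^{2d} + α₂Y^{2d} − 2d·X^{α₁}Y^{α₂}` is a sum of
binomial squares. -/
theorem hurwitz_reznick_two_vars {d : ℕ} (hd : 1 ≤ d) (α₁ α₂ : ℕ)
    (hα : α₁ + α₂ = 2 * d) :
    IsSOBS2 (C ((α₁ : ℕ) : ℝ) * X 0 ^ (2 * d) + C ((α₂ : ℕ) : ℝ) * X 1 ^ (2 * d)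
      - C ((2 * d : ℕ) : ℝ) * (X 0 ^ α₁ * X 1 ^ α₂)) :=
  hurwitz_reznick_two_vars_general α₁ α₂ hα
end

section
/- Let d ≥ 1, α ∈ ℕ^n with |α| = 2d, and suppose there exist distinct indices i_1 ≠ i_2 with α_{i_1} ≤ d and α_{i_2} ≤ d. Write α = β + γ with β, γ ∈ ℕ^n, β_{i_1} = 0, γ_{i_2} = 0, |β| = |γ| = d. Then Σ_i α_i X_i^{2d} − 2d·X^α = (1/2)(Σ_i 2β_i X_i^{2d} − 2d·X^{2β}) + (1/2)(Σ_i 2γ_i X_i^{2d} − 2d·X^{2γ}) + d·(X^β − X^γ)^2. -/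
open MvPolynomial

/-! Since `α = β + γ`, the weighted power sum `Σ α_i X_i^{2d}` splits as the `β`-sum plus the
`γ`-sum, `X^α = X^β X^γ` and `X^{2β} = (X^β)²`, so the claim is the ring identity
`A + B − 2mxy = ½(2A − 2mx²) + ½(2B − 2my²) + m(x − y)²`. -/

theorem add_sub_two_mul_eq_half_add_half_add_sq {R : Type*} [CommRing R] {c : R}
    (hc : c * 2 = 1) (A B x y m : R) :
    A + B - 2 * (m * (x * y))
      = c * (2 * A - 2 * (m * x ^ 2)) + c * (2 * B - 2 * (m * y ^ 2)) + m * (x - y) ^ 2 := by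
  linear_combination (A + B - m * x ^ 2 - m * y ^ 2) * (-hc)

theorem hurwitz_reznick_step_general {n d : ℕ} (α β γ : Fin n →₀ ℕ)
    (hsplit : α = β + γ) :
    (∑ i, C ((α i : ℕ) : ℝ) * X i ^ (2 * d)) - C ((2 * d : ℕ) : ℝ) * monomial α 1
      = C (1 / 2) * ((∑ i, C ((2 * β i : ℕ) : ℝ) * X i ^ (2 * d))
            - C ((2 * d : ℕ) : ℝ) * monomial (2 • β) 1)
        + C (1 / 2) * ((∑ i, C ((2 * γ i : ℕ) : ℝ) * X i ^ (2 * d))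
            - C ((2 * d : ℕ) : ℝ) * monomial (2 • γ) 1)
        + C ((d : ℕ) : ℝ) * (monomial β 1 - monomial γ 1) ^ 2 := by
  have half_mul_two : C (1 / 2 : ℝ) * 2 = (1 : MvPolynomial (Fin n) ℝ) := by
    rw [← map_ofNat C 2, ← C_mul]
    norm_num
  have monomial_add : monomial (β + γ) (1 : ℝ) = monomial β 1 * monomial γ 1 := by
    rw [monomial_mul, one_mul]
  have monomial_two_nsmul (s : Fin n →₀ ℕ) : monomial (2 • s) (1 : ℝ) = monomial s 1 ^ 2 := by
    rw [monomial_pow, one_pow]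
  rw [hsplit, monomial_add, monomial_two_nsmul, monomial_two_nsmul]
  simp only [Finsupp.add_apply, Nat.cast_add, Nat.cast_mul, Nat.cast_ofNat, map_add, map_mul,
    map_ofNat, map_natCast, add_mul, mul_assoc, Finset.sum_add_distrib, ← Finset.mul_sum]
  exact add_sub_two_mul_eq_half_add_half_add_sq half_mul_two _ _ _ _ _

/-- The polynomial identity used in the inductive step of the proof of the
Hurwitz–Reznick theorem: if `α = β + γ` with `β_{i₁} = 0`, `γ_{i₂} = 0`,
`|β| = |γ| = d`, `|α| = 2d`, `α_{i₁} ≤ d`, `α_{i₂} ≤ d`, `i₁ ≠ i₂`, then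
`Σ α_i X_i^{2d} − 2d·X^α = ½(Σ 2β_i X_i^{2d} − 2d·X^{2β})
  + ½(Σ 2γ_i X_i^{2d} − 2d·X^{2γ}) + d·(X^β − X^γ)²`. -/
theorem hurwitz_reznick_step {n d : ℕ} (hd : 1 ≤ d) (i₁ i₂ : Fin n)
    (hne : i₁ ≠ i₂) (α β γ : Fin n →₀ ℕ)
    (hα : ∑ i, α i = 2 * d) (h1 : α i₁ ≤ d) (h2 : α i₂ ≤ d)
    (hsplit : α = β + γ) (hβ : β i₁ = 0) (hγ : γ i₂ = 0)
    (hβd : ∑ i, β i = d) (hγd : ∑ i, γ i = d) :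
    (∑ i, C ((α i : ℕ) : ℝ) * X i ^ (2 * d)) - C ((2 * d : ℕ) : ℝ) * monomial α 1
      = C (1 / 2) * ((∑ i, C ((2 * β i : ℕ) : ℝ) * X i ^ (2 * d))
            - C ((2 * d : ℕ) : ℝ) * monomial (2 • β) 1)
        + C (1 / 2) * ((∑ i, C ((2 * γ i : ℕ) : ℝ) * X i ^ (2 * d))
            - C ((2 * d : ℕ) : ℝ) * monomial (2 • γ) 1)
        + C ((d : ℕ) : ℝ) * (monomial β 1 - monomial γ 1) ^ 2 :=
  hurwitz_reznick_step_general α β γ hsplit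
end
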